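/- arXiv:1608.02197 — 9 statements merged into one kernel-verified Lean document; each statement's English description precedes it below -/
import Mathlib

section
/- Let k ≥ 1 and n_1,…,n_k be integers with each n_i ≥ 2. The number of edges of the hierarchical graph H_{n_1,…,n_k} equals C(n_1,2)·∏_{i=2}^{k} n_i + ∑_{i=2}^{k} ( ∏_{j=1}^{i} (n_j−1) )·( ∏_{j=i+1}^{k} n_j ) + ∑_{i=2}^{k} C(n_i−1,2)·( ∏_{j=i+1}^{k} n_j ), where C(m,2) = m(m−1)/2 and empty products equal 1. -/
/-- The value of the `j`-th coordinate (0-indexed) of the string `x`,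
extended by `0` for positions `≥ k`. -/
def extVal (n : ℕ → ℕ) (k : ℕ) (x : ∀ i : Fin k, Fin (n i)) (j : ℕ) : ℕ :=
  if h : j < k then (x ⟨j, h⟩).val else 0

/-- The alternating number of the string `x`: the number of (0-indexed) positions
`j ∈ {0,…,k-1}` such that exactly one of `x_j`, `x_{j+1}` is zero (with `x_k := 0`). -/
def altNum (n : ℕ → ℕ) (k : ℕ) (x : ∀ i : Fin k, Fin (n i)) : ℕ :=
  ((Finset.range k).filter (fun j =>
    (extVal n k x j = 0 ∧ extVal n k x (j + 1) ≠ 0) ∨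
    (extVal n k x j ≠ 0 ∧ extVal n k x (j + 1) = 0))).card

/-- Adjacency in the hierarchical graph `H_{n_1,…,n_k}` (coordinates 0-indexed):
rule (A1): the two strings differ exactly in the first coordinate;
rule (A2): for some `j`, one string has its first `j+1` coordinates all zero, the other
has its first `j+1` coordinates all nonzero, and they agree on the remaining coordinates;
rule (A3): for some `m ≥ 1`, both strings have their first `m` coordinates zero, their
`m`-th coordinates are distinct and nonzero, and they agree beyond position `m`. -/
def HierAdj (n : ℕ → ℕ) (k : ℕ) (x y : ∀ i : Fin k, Fin (n i)) : Prop :=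
  x ≠ y ∧
    ((∀ i : Fin k, 0 < i.val → x i = y i) ∨
     (∃ j : Fin k,
       (((∀ i : Fin k, i.val ≤ j.val → (x i).val = 0) ∧
         (∀ i : Fin k, i.val ≤ j.val → (y i).val ≠ 0)) ∨
        ((∀ i : Fin k, i.val ≤ j.val → (y i).val = 0) ∧
         (∀ i : Fin k, i.val ≤ j.val → (x i).val ≠ 0))) ∧
       (∀ i : Fin k, j.val < i.val → x i = y i)) ∨
     (∃ m : Fin k, 0 < m.val ∧
       (∀ i : Fin k, i.val < m.val → (x i).val = 0 ∧ (y i).val = 0) ∧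
       (x m).val ≠ 0 ∧ (y m).val ≠ 0 ∧ x m ≠ y m ∧
       (∀ i : Fin k, m.val < i.val → x i = y i)))

/-- The hierarchical graph `H_{n_1,…,n_k}` as a simple graph on the strings
`x = x_1…x_k` with `x_i ∈ Z_{n_i}`. -/
def hierGraph (n : ℕ → ℕ) (k : ℕ) : SimpleGraph (∀ i : Fin k, Fin (n i)) where
  Adj := HierAdj n k
  symm := by
    constructor
    rintro x y ⟨hne, h⟩
    refine ⟨hne.symm, ?_⟩
    rcases h with h | ⟨j, hj, hag⟩ | ⟨m, hm, hpre, hx, hy, hxy, hs⟩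
    · exact Or.inl fun i hi => (h i hi).symm
    · exact Or.inr (Or.inl ⟨j, hj.symm, fun i hi => (hag i hi).symm⟩)
    · exact Or.inr (Or.inr ⟨m, hm, fun i hi => ⟨(hpre i hi).2, (hpre i hi).1⟩,
        hy, hx, hxy.symm, fun i hi => (hs i hi).symm⟩)
  loopless := ⟨fun x h => h.1 rfl⟩

/-!
Count ordered adjacent pairs `(x, y)`, i.e. twice the number of edges, by the last coordinate `d`
at which `x` and `y` differ. At level `d` an adjacent pair has one of three shapes, each a
coordinatewise condition: zeros in `x` and nonzeros in `y` at positions `≤ d` (rule A2), the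
reverse, or both strings zero below `d` with distinct nonzero `d`-th coordinates (rule A3); at
level `0` these three shapes together make up rule A1. A coordinatewise condition is counted by a
product, so level `d` contributes `2 (∏_{j ≤ d} (n_j - 1) + C(n_d - 1, 2)) ∏_{j > d} n_j` pairs,
and Pascal's rule `(n_0 - 1) + C(n_0 - 1, 2) = C(n_0, 2)` turns level `0` into the first summand.
-/

open Finset
open scoped Classical

theorem card_pairs_forall_rel {ι : Type*} [Fintype ι] [DecidableEq ι] {α : ι → Type*}
    [∀ i, Fintype (α i)] (R : ∀ i, α i → α i → Prop)
    [DecidablePred fun p : (∀ i, α i) × (∀ i, α i) => ∀ i, R i (p.1 i) (p.2 i)]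
    [∀ i, DecidablePred fun q : α i × α i => R i q.1 q.2] :
    #{p : (∀ i, α i) × (∀ i, α i) | ∀ i, R i (p.1 i) (p.2 i)} =
      ∏ i, #{q : α i × α i | R i q.1 q.2} := by
  simp only [← Fintype.card_subtype]
  rw [← Fintype.card_pi]
  exact Fintype.card_congr <|
    (Equiv.subtypeEquiv (Equiv.arrowProdEquivProdArrow ι α α).symm fun _ => Iff.rfl).trans
      (Equiv.subtypePiEquivPi (p := fun i (q : α i × α i) => R i q.1 q.2))

theorem two_mul_choose_two (N : ℕ) : 2 * N.choose 2 = N * (N - 1) := by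
  rw [Nat.choose_two_right, Nat.mul_div_cancel' (Nat.even_mul_pred_self N).two_dvd]

/- The relations below are applied to a position `i` and the values `a`, `b` of the two strings
at that position. -/

def climbRel : ℕ → ℕ → ℕ → Prop := fun _ a b => a = 0 ∧ b ≠ 0

def fallRel : ℕ → ℕ → ℕ → Prop := fun _ a b => a ≠ 0 ∧ b = 0

def branchRel (m : ℕ) : ℕ → ℕ → ℕ → Prop :=
  fun i a b => if i < m then a = 0 ∧ b = 0 else a ≠ 0 ∧ b ≠ 0 ∧ a ≠ b

section CoordinateCounts

variable {N : ℕ}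

theorem card_fin_val_ne_zero : #{a : Fin N | a.val ≠ 0} = N - 1 := by
  rcases N with _ | N
  · simp
  · simp only [Fin.val_eq_zero_iff, ne_eq, filter_ne', mem_univ, card_erase_of_mem, card_univ,
      Fintype.card_fin]

theorem card_fin_val_eq_zero (hN : 0 < N) : #{a : Fin N | a.val = 0} = 1 := by
  obtain ⟨N, rfl⟩ := Nat.exists_eq_add_of_lt hN
  simp only [Fin.val_eq_zero_iff, filter_eq', mem_univ, if_true, card_singleton]

theorem card_pairs_eq : #{q : Fin N × Fin N | q.1 = q.2} = N := by
  have : ({q : Fin N × Fin N | q.1 = q.2} : Finset (Fin N × Fin N)) = univ.diag := by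
    ext; simp
  rw [this, diag_card, card_univ, Fintype.card_fin]

theorem card_pairs_climbRel (hN : 0 < N) (i : ℕ) :
    #{q : Fin N × Fin N | climbRel i q.1 q.2} = N - 1 := by
  have h := card_product {a : Fin N | a.val = 0} {b : Fin N | b.val ≠ 0}
  rw [card_fin_val_eq_zero hN, card_fin_val_ne_zero, one_mul] at h
  rw [← h]
  congr 1; ext; simp only [mem_filter, mem_univ, true_and, mem_product]; rfl

theorem card_pairs_fallRel (hN : 0 < N) (i : ℕ) :
    #{q : Fin N × Fin N | fallRel i q.1 q.2} = N - 1 := by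
  have h := card_product {a : Fin N | a.val ≠ 0} {b : Fin N | b.val = 0}
  rw [card_fin_val_eq_zero hN, card_fin_val_ne_zero, mul_one] at h
  rw [← h]
  congr 1; ext; simp only [mem_filter, mem_univ, true_and, mem_product]; rfl

theorem card_pairs_branchRel_of_lt (hN : 0 < N) {i m : ℕ} (hi : i < m) :
    #{q : Fin N × Fin N | branchRel m i q.1 q.2} = 1 := by
  have h := card_product {a : Fin N | a.val = 0} {b : Fin N | b.val = 0}
  rw [card_fin_val_eq_zero hN, mul_one] at h
  rw [← h]
  congr 1; ext; simp [branchRel, hi]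

theorem card_pairs_branchRel_self (m : ℕ) :
    #{q : Fin N × Fin N | branchRel m m q.1 q.2} = 2 * (N - 1).choose 2 := by
  have h := offDiag_card {a : Fin N | a.val ≠ 0}
  rw [card_fin_val_ne_zero, ← Nat.mul_sub_one, ← two_mul_choose_two] at h
  rw [← h]
  congr 1; ext; simp [branchRel, Fin.val_ne_iff]

end CoordinateCounts

section BlockPairs

variable {n : ℕ → ℕ} {k : ℕ}

noncomputable def blockPairs (n : ℕ → ℕ) (k d : ℕ) (R : ℕ → ℕ → ℕ → Prop) :
    Finset ((∀ i : Fin k, Fin (n i)) × (∀ i : Fin k, Fin (n i))) :=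
  {p | ∀ i : Fin k, (i.val ≤ d → R i (p.1 i) (p.2 i)) ∧ (d < i.val → p.1 i = p.2 i)}

theorem mem_blockPairs {d : ℕ} {R : ℕ → ℕ → ℕ → Prop} {x y : ∀ i : Fin k, Fin (n i)} :
    (x, y) ∈ blockPairs n k d R ↔
      ∀ i : Fin k, (i.val ≤ d → R i (x i) (y i)) ∧ (d < i.val → x i = y i) := by
  simp [blockPairs]

theorem card_blockPairs (R : ℕ → ℕ → ℕ → Prop) {d : ℕ} (hd : d < k) :
    #(blockPairs n k d R) =
      (∏ i ∈ range (d + 1), #{q : Fin (n i) × Fin (n i) | R i q.1 q.2}) *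
        ∏ i ∈ Ico (d + 1) k, n i := by
  set f : ℕ → ℕ := fun i => if i ≤ d then #{q : Fin (n i) × Fin (n i) | R i q.1 q.2} else n i
  have hf (i : Fin k) : #{q : Fin (n i) × Fin (n i) |
      (i.val ≤ d → R i q.1 q.2) ∧ (d < i.val → q.1 = q.2)} = f i := by
    by_cases hi : i.val ≤ d
    · simp [f, hi]
    · simp [f, hi, Nat.lt_of_not_le hi, card_pairs_eq]
  rw [blockPairs, card_pairs_forall_rel fun (i : Fin k) (a b : Fin (n i)) =>
      (i.val ≤ d → R i a b) ∧ (d < i.val → a = b),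
    prod_congr rfl fun i _ => hf i, Fin.prod_univ_eq_prod_range f,
    ← prod_range_mul_prod_Ico f (Nat.succ_le_of_lt hd)]
  congr 1
  · exact prod_congr rfl fun i hi => if_pos (Nat.lt_succ_iff.mp (mem_range.mp hi))
  · exact prod_congr rfl fun i hi => if_neg (by simp at hi; omega)

theorem disjoint_blockPairs {d : ℕ} (hd : d < k) {R R' : ℕ → ℕ → ℕ → Prop}
    (h : ∀ a b, R d a b → ¬ R' d a b) :
    Disjoint (blockPairs n k d R) (blockPairs n k d R') := by
  rw [disjoint_left]
  rintro ⟨x, y⟩ hR hR'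
  rw [mem_blockPairs] at hR hR'
  exact h _ _ ((hR ⟨d, hd⟩).1 le_rfl) ((hR' ⟨d, hd⟩).1 le_rfl)

theorem ne_of_mem_blockPairs {d : ℕ} (hd : d < k) {R : ℕ → ℕ → ℕ → Prop}
    (hR : ∀ a b, R d a b → a ≠ b) {x y : ∀ i : Fin k, Fin (n i)}
    (h : (x, y) ∈ blockPairs n k d R) : x ⟨d, hd⟩ ≠ y ⟨d, hd⟩ :=
  fun he => hR _ _ ((mem_blockPairs.mp h ⟨d, hd⟩).1 le_rfl) (congrArg Fin.val he)

end BlockPairs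

/-- The adjacent pairs whose last differing coordinate is `d`: rule (A2) with `j = d` in either
orientation, and rule (A3) with `m = d`; for `d = 0` the three parts together form rule (A1). -/
noncomputable def levelPairs (n : ℕ → ℕ) (k d : ℕ) :
    Finset ((∀ i : Fin k, Fin (n i)) × (∀ i : Fin k, Fin (n i))) :=
  blockPairs n k d climbRel ∪ blockPairs n k d fallRel ∪ blockPairs n k d (branchRel d)

section Levels

variable {n : ℕ → ℕ} {k : ℕ} {x y : ∀ i : Fin k, Fin (n i)}

theorem ne_of_mem_levelPairs {d : ℕ} (hd : d < k) (h : (x, y) ∈ levelPairs n k d) :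
    x ⟨d, hd⟩ ≠ y ⟨d, hd⟩ := by
  simp only [levelPairs, mem_union] at h
  rcases h with (h | h) | h
  · exact ne_of_mem_blockPairs hd (by rintro a b ⟨rfl, hb⟩; exact hb.symm) h
  · exact ne_of_mem_blockPairs hd (by rintro a b ⟨ha, rfl⟩; exact ha) h
  · exact ne_of_mem_blockPairs hd (by simp [branchRel]) h

theorem eq_of_mem_levelPairs {d : ℕ} (h : (x, y) ∈ levelPairs n k d) (i : Fin k)
    (hi : d < i.val) : x i = y i := by
  simp only [levelPairs, mem_union] at h
  rcases h with (h | h) | h <;> exact (mem_blockPairs.mp h i).2 hi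

theorem card_levelPairs (hn : ∀ i < k, 2 ≤ n i) {d : ℕ} (hd : d < k) :
    #(levelPairs n k d) =
      2 * ((∏ i ∈ range (d + 1), (n i - 1)) + (n d - 1).choose 2) *
        ∏ i ∈ Ico (d + 1) k, n i := by
  have hpos {i} (hi : i ≤ d) : 0 < n i := by have := hn i (by omega); omega
  have hclimb := card_blockPairs (n := n) climbRel hd
  have hfall := card_blockPairs (n := n) fallRel hd
  have hbranch := card_blockPairs (n := n) (branchRel d) hd
  rw [prod_congr rfl fun i hi => card_pairs_climbRel (hpos (mem_range_succ_iff.mp hi)) i]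
    at hclimb
  rw [prod_congr rfl fun i hi => card_pairs_fallRel (hpos (mem_range_succ_iff.mp hi)) i]
    at hfall
  rw [prod_range_succ, prod_congr rfl fun i hi =>
      card_pairs_branchRel_of_lt (hpos (mem_range.mp hi).le) (mem_range.mp hi),
    prod_const_one, one_mul, card_pairs_branchRel_self] at hbranch
  have hdisj_branch {R : ℕ → ℕ → ℕ → Prop} (hR : ∀ a b, R d a b → a = 0 ∨ b = 0) :
      Disjoint (blockPairs n k d R) (blockPairs n k d (branchRel d)) :=
    disjoint_blockPairs hd fun a b h h' => by
      simp only [branchRel, lt_irrefl, if_false] at h'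
      exact (hR a b h).elim h'.1 h'.2.1
  rw [levelPairs, card_union_of_disjoint, card_union_of_disjoint, hclimb, hfall, hbranch]
  · ring
  · exact disjoint_blockPairs hd fun a b h h' => h'.1 h.1
  · exact disjoint_union_left.mpr
      ⟨hdisj_branch fun a b h => Or.inl h.1, hdisj_branch fun a b h => Or.inr h.2⟩

theorem mem_levelPairs_zero (hxy : x ≠ y) (hag : ∀ i : Fin k, 0 < i.val → x i = y i) :
    (x, y) ∈ levelPairs n k 0 := by
  obtain ⟨i, hi⟩ := Function.ne_iff.mp hxy
  have hi0 : i.val = 0 := Nat.eq_zero_of_not_pos fun h => hi (hag i h)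
  have hmem {R : ℕ → ℕ → ℕ → Prop} (hR : R i (x i) (y i)) : (x, y) ∈ blockPairs n k 0 R :=
    mem_blockPairs.mpr fun j => ⟨fun hj => by rwa [show j = i from Fin.ext (by omega)], hag j⟩
  simp only [levelPairs, mem_union]
  by_cases hx : (x i).val = 0 <;> by_cases hy : (y i).val = 0
  · exact absurd (Fin.ext (hx.trans hy.symm)) hi
  · exact Or.inl (Or.inl (hmem ⟨hx, hy⟩))
  · exact Or.inl (Or.inr (hmem ⟨hx, hy⟩))
  · exact Or.inr (hmem (by simpa [branchRel] using ⟨hx, hy, Fin.val_ne_iff.mpr hi⟩))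

theorem exists_mem_levelPairs_of_adj (h : (hierGraph n k).Adj x y) :
    ∃ d < k, (x, y) ∈ levelPairs n k d := by
  obtain ⟨hxy, hA1 | ⟨j, hA2, hag⟩ | ⟨m, -, hzero, hx, hy, hxy', hag⟩⟩ := h
  · obtain ⟨i, -⟩ := Function.ne_iff.mp hxy
    exact ⟨0, i.pos, mem_levelPairs_zero hxy hA1⟩
  · refine ⟨j, j.isLt, ?_⟩
    simp only [levelPairs, mem_union, mem_blockPairs, climbRel, fallRel]
    rcases hA2 with ⟨hx, hy⟩ | ⟨hy, hx⟩
    · exact Or.inl (Or.inl fun i => ⟨fun hi => ⟨hx i hi, hy i hi⟩, hag i⟩)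
    · exact Or.inl (Or.inr fun i => ⟨fun hi => ⟨hx i hi, hy i hi⟩, hag i⟩)
  · refine ⟨m, m.isLt, ?_⟩
    simp only [levelPairs, mem_union, mem_blockPairs, branchRel]
    refine Or.inr fun i => ⟨fun hi => ?_, hag i⟩
    rcases hi.lt_or_eq with hi | hi
    · simpa [hi] using hzero i hi
    · rw [show i = m from Fin.ext hi]
      simpa using ⟨hx, hy, Fin.val_ne_iff.mpr hxy'⟩

theorem adj_of_mem_levelPairs {d : ℕ} (hd : d < k) (h : (x, y) ∈ levelPairs n k d) :
    (hierGraph n k).Adj x y := by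
  refine ⟨fun he => ne_of_mem_levelPairs hd h (congrFun he _), ?_⟩
  rcases Nat.eq_zero_or_pos d with rfl | hd0
  · exact Or.inl (eq_of_mem_levelPairs h)
  simp only [levelPairs, mem_union, mem_blockPairs, climbRel, fallRel, branchRel] at h
  rcases h with (h | h) | h
  · exact Or.inr (Or.inl ⟨⟨d, hd⟩,
      Or.inl ⟨fun i hi => ((h i).1 hi).1, fun i hi => ((h i).1 hi).2⟩, fun i => (h i).2⟩)
  · exact Or.inr (Or.inl ⟨⟨d, hd⟩,
      Or.inr ⟨fun i hi => ((h i).1 hi).2, fun i hi => ((h i).1 hi).1⟩, fun i => (h i).2⟩)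
  · have hdd := (h ⟨d, hd⟩).1 le_rfl
    simp only [lt_irrefl, if_false] at hdd
    exact Or.inr (Or.inr ⟨⟨d, hd⟩, hd0, fun i hi => by simpa [hi] using (h i).1 hi.le,
      hdd.1, hdd.2.1, Fin.val_ne_iff.mp hdd.2.2, fun i => (h i).2⟩)

theorem two_mul_ncard_edgeSet_hierGraph :
    2 * (hierGraph n k).edgeSet.ncard = ∑ d ∈ range k, #(levelPairs n k d) := by
  have hdisj : (range k : Set ℕ).PairwiseDisjoint (levelPairs n k) := by
    intro d hd e he hde
    wlog hlt : d < e generalizing d e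
    · exact (this he hd hde.symm (by omega)).symm
    rw [Function.onFun, disjoint_left]
    rintro ⟨x, y⟩ hxd hxe
    have he : e < k := by simpa using he
    exact ne_of_mem_levelPairs he hxe (eq_of_mem_levelPairs hxd ⟨e, he⟩ hlt)
  rw [Set.ncard_eq_toFinset_card', ← SimpleGraph.edgeFinset,
    SimpleGraph.two_mul_card_edgeFinset, ← card_biUnion hdisj]
  congr 1
  ext ⟨x, y⟩
  simpa using ⟨exists_mem_levelPairs_of_adj, fun ⟨d, hd, h⟩ => adj_of_mem_levelPairs hd h⟩

end Levels

/-- The number of edges of `H_{n_1,…,n_k}`. -/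
theorem stmt_0 (n : ℕ → ℕ) (k : ℕ) (hk : 1 ≤ k) (hn : ∀ i < k, 2 ≤ n i) :
    (hierGraph n k).edgeSet.ncard =
      Nat.choose (n 0) 2 * ∏ i ∈ Finset.Ico 1 k, n i +
      ∑ i ∈ Finset.Ico 1 k,
        (∏ j ∈ Finset.range (i + 1), (n j - 1)) * ∏ j ∈ Finset.Ico (i + 1) k, n j +
      ∑ i ∈ Finset.Ico 1 k,
        Nat.choose (n i - 1) 2 * ∏ j ∈ Finset.Ico (i + 1) k, n j := by
  have hpascal : (n 0 - 1) + (n 0 - 1).choose 2 = (n 0).choose 2 := by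
    obtain ⟨m, hm⟩ := Nat.exists_eq_add_of_le' (hn 0 hk)
    rw [hm, Nat.choose_succ_succ' (m + 1), Nat.choose_one_right]
    rfl
  have htwice := two_mul_ncard_edgeSet_hierGraph (n := n) (k := k)
  rw [sum_congr rfl fun d hd => card_levelPairs hn (mem_range.mp hd), sum_range_eq_add_Ico _ hk,
    prod_range_one, hpascal] at htwice
  simp only [zero_add, mul_assoc, ← mul_sum, ← mul_add, add_mul, sum_add_distrib] at htwice
  omega
end

section
/- Let k ≥ 1 and n_1,…,n_k be integers with each n_i ≥ 2. The hierarchical graph H_{n_1,…,n_k} is connected. -/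
/-!
Rule (A2) alone connects the graph. Replacing the zero prefix of length `m` of a string `x`
with `x_m ≠ 0` by a prefix of ones is an (A2)-edge, and so is replacing that prefix of ones
together with `x_m` by zeros. Hence the zero prefix of any string can be lengthened one
coordinate at a time, until every string is joined to the zero string.
-/

namespace hierGraph

variable {n : ℕ → ℕ} {k : ℕ}

def fillPrefix (z x : ∀ i : Fin k, Fin (n i)) (m : ℕ) : ∀ i : Fin k, Fin (n i) :=
  fun i => if i.val < m then z i else x i

theorem reachable_of_prefix_zero_nonzero {x y : ∀ i : Fin k, Fin (n i)} {m : ℕ}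
    (hmk : m ≤ k) (hx : ∀ i : Fin k, i.val < m → (x i).val = 0)
    (hy : ∀ i : Fin k, i.val < m → (y i).val ≠ 0)
    (hxy : ∀ i : Fin k, m ≤ i.val → x i = y i) : (hierGraph n k).Reachable x y := by
  rcases Nat.eq_zero_or_pos m with rfl | hm
  · exact funext (fun i => hxy i i.val.zero_le) ▸ .refl x
  refine SimpleGraph.Adj.reachable ⟨fun h => ?_, Or.inr (Or.inl
    ⟨⟨m - 1, by omega⟩, Or.inl ⟨fun i hi => hx i (by simp at hi; omega),
      fun i hi => hy i (by simp at hi; omega)⟩, fun i hi => hxy i (by simp at hi; omega)⟩)⟩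
  exact hy ⟨0, by omega⟩ hm (h ▸ hx ⟨0, by omega⟩ hm)

theorem reachable_of_extend_zero_prefix (hn : ∀ i < k, 2 ≤ n i)
    {x y : ∀ i : Fin k, Fin (n i)} (m : Fin k)
    (hx : ∀ i : Fin k, i < m → (x i).val = 0) (hy : ∀ i : Fin k, i ≤ m → (y i).val = 0)
    (hxy : ∀ i : Fin k, m < i → x i = y i) : (hierGraph n k).Reachable x y := by
  by_cases hxm : (x m).val = 0
  · suffices x = y from this ▸ .refl x
    funext i
    rcases lt_trichotomy i m with h | rfl | h
    · exact Fin.ext ((hx i h).trans (hy i h.le).symm)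
    · exact Fin.ext (hxm.trans (hy i le_rfl).symm)
    · exact hxy i h
  let w := fillPrefix (fun i => ⟨1, hn i i.isLt⟩) x m
  have hxw : (hierGraph n k).Reachable x w :=
    reachable_of_prefix_zero_nonzero m.isLt.le hx (fun i hi => by simp [w, fillPrefix, hi])
      (fun i hi => by simp [w, fillPrefix, Nat.not_lt.mpr hi])
  have hyw : (hierGraph n k).Reachable y w := by
    refine reachable_of_prefix_zero_nonzero m.isLt (fun i hi => hy i (by omega))
      (fun i hi => ?_) (fun i hi => ?_)
    · rcases Nat.lt_succ_iff_lt_or_eq.mp hi with hi | hi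
      · simp [w, fillPrefix, hi]
      · obtain rfl : i = m := Fin.ext hi
        simpa [w, fillPrefix] using hxm
    · simp [w, fillPrefix, (show ¬ i.val < m by omega)]
      exact (hxy i (by omega)).symm
  exact hxw.trans hyw.symm

theorem reachable_fillPrefix_zero (hn : ∀ i < k, 2 ≤ n i) {z : ∀ i : Fin k, Fin (n i)}
    (hz : ∀ i, (z i).val = 0) (x : ∀ i : Fin k, Fin (n i)) {m : ℕ} (hm : m ≤ k) :
    (hierGraph n k).Reachable x (fillPrefix z x m) := by
  induction m with
  | zero =>
    have hfill : fillPrefix z x 0 = x := by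
      funext i; simp [fillPrefix]
    exact hfill ▸ .refl x
  | succ m ih =>
    refine (ih (by omega)).trans (reachable_of_extend_zero_prefix hn ⟨m, by omega⟩
      (fun i hi => ?_) (fun i hi => ?_) (fun i hi => ?_))
    · simp [fillPrefix, Fin.lt_def.mp hi, hz]
    · simp [fillPrefix, Nat.lt_succ_of_le (Fin.le_def.mp hi), hz]
    · have : m < i.val := hi
      simp [fillPrefix, (show ¬ i.val < m by omega), (show ¬ i.val < m + 1 by omega)]

end hierGraph

theorem stmt_1_general (n : ℕ → ℕ) (k : ℕ) (hn : ∀ i < k, 2 ≤ n i) :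
    (hierGraph n k).Connected := by
  let zero : ∀ i : Fin k, Fin (n i) := fun i => ⟨0, by have := hn i i.isLt; omega⟩
  have hzero (x : ∀ i : Fin k, Fin (n i)) : (hierGraph n k).Reachable x zero := by
    have hfill : hierGraph.fillPrefix zero x k = zero := by
      funext i; simp [hierGraph.fillPrefix, i.isLt]
    exact hfill ▸ hierGraph.reachable_fillPrefix_zero hn (fun _ => rfl) x le_rfl
  have : Nonempty (∀ i : Fin k, Fin (n i)) := ⟨zero⟩
  exact ⟨fun x y => (hzero x).trans (hzero y).symm⟩

/-- The hierarchical graph `H_{n_1,…,n_k}` is connected. -/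
theorem stmt_1 (n : ℕ → ℕ) (k : ℕ) (hk : 1 ≤ k) (hn : ∀ i < k, 2 ≤ n i) :
    (hierGraph n k).Connected :=
  stmt_1_general n k hn
end

section
/- Let x and y be adjacent vertices of the hierarchical graph H_{n_1,…,n_k}. (a) If x and y are adjacent by rule (A1), i.e. they differ exactly in the first coordinate, then |alt(x) − alt(y)| = 1 when exactly one of x_1, y_1 is zero, and alt(x) = alt(y) when both x_1 and y_1 are nonzero. (b) If x and y are adjacent by rule (A2) with j ≥ 1, then |alt(x) − alt(y)| = 1. (c) If x and y are adjacent by rule (A3), then alt(x) = alt(y). -/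
open Finset

theorem Finset.card_filter_eq_add_one_or {α : Type*} [DecidableEq α] {s : Finset α}
    {p q : α → Prop} [DecidablePred p] [DecidablePred q] {t : α} (ht : t ∈ s)
    (hpq : ∀ i ∈ s, i ≠ t → (p i ↔ q i)) (hpt : p t ↔ ¬ q t) :
    #(s.filter p) = #(s.filter q) + 1 ∨ #(s.filter q) = #(s.filter p) + 1 := by
  have hrest : (s.erase t).filter p = (s.erase t).filter q :=
    filter_congr fun i hi => hpq i (mem_of_mem_erase hi) (ne_of_mem_erase hi)
  have htp : t ∉ (s.erase t).filter p := fun h => by simp at h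
  have htq : t ∉ (s.erase t).filter q := fun h => by simp at h
  rw [← insert_erase ht, filter_insert, filter_insert]
  by_cases h : p t
  · rw [if_pos h, if_neg (hpt.1 h), card_insert_of_notMem htp, hrest]
    exact Or.inl rfl
  · rw [if_neg h, if_pos (not_not.1 (mt hpt.2 h)), card_insert_of_notMem htq, hrest]
    exact Or.inr rfl

section Alternation

variable {n : ℕ → ℕ} {k : ℕ} {x y : ∀ i : Fin k, Fin (n i)}

def IsAltAt (n : ℕ → ℕ) (k : ℕ) (x : ∀ i : Fin k, Fin (n i)) (j : ℕ) : Prop :=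
  (extVal n k x j = 0 ∧ extVal n k x (j + 1) ≠ 0) ∨
    (extVal n k x j ≠ 0 ∧ extVal n k x (j + 1) = 0)

instance (j : ℕ) : Decidable (IsAltAt n k x j) := inferInstanceAs (Decidable (_ ∨ _))

theorem altNum_eq_card_filter_isAltAt :
    altNum n k x = #((range k).filter (IsAltAt n k x)) := rfl

theorem extVal_of_lt {j : ℕ} (hj : j < k) : extVal n k x j = (x ⟨j, hj⟩).val := dif_pos hj

theorem extVal_eq_of_forall_lt {t j : ℕ} (hxy : ∀ i : Fin k, t < i.val → x i = y i)
    (hj : t < j) : extVal n k x j = extVal n k y j := by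
  unfold extVal
  split_ifs with h
  · rw [hxy ⟨j, h⟩ hj]
  · rfl

theorem extVal_eq_zero_iff_of_forall (h : ∀ i : Fin k, (x i).val = 0 ↔ (y i).val = 0)
    (j : ℕ) : extVal n k x j = 0 ↔ extVal n k y j = 0 := by
  unfold extVal
  split_ifs
  · exact h _
  · rfl

theorem isAltAt_congr {j : ℕ} (h₀ : extVal n k x j = 0 ↔ extVal n k y j = 0)
    (h₁ : extVal n k x (j + 1) = 0 ↔ extVal n k y (j + 1) = 0) :
    IsAltAt n k x j ↔ IsAltAt n k y j := by
  unfold IsAltAt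
  tauto

theorem isAltAt_iff_not {j : ℕ} (hx : extVal n k x j = 0) (hy : extVal n k y j ≠ 0)
    (h₁ : extVal n k x (j + 1) = 0 ↔ extVal n k y (j + 1) = 0) :
    IsAltAt n k x j ↔ ¬ IsAltAt n k y j := by
  unfold IsAltAt
  tauto

theorem not_isAltAt_of_eq_zero {j : ℕ} (h₀ : extVal n k x j = 0)
    (h₁ : extVal n k x (j + 1) = 0) : ¬ IsAltAt n k x j := by
  unfold IsAltAt
  tauto

theorem not_isAltAt_of_ne_zero {j : ℕ} (h₀ : extVal n k x j ≠ 0)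
    (h₁ : extVal n k x (j + 1) ≠ 0) : ¬ IsAltAt n k x j := by
  unfold IsAltAt
  tauto

theorem altNum_eq_of_forall_eq_zero_iff (h : ∀ i : Fin k, (x i).val = 0 ↔ (y i).val = 0) :
    altNum n k x = altNum n k y := by
  simp only [altNum_eq_card_filter_isAltAt]
  exact congrArg card <| filter_congr fun j _ =>
    isAltAt_congr (extVal_eq_zero_iff_of_forall h j) (extVal_eq_zero_iff_of_forall h (j + 1))

theorem altNum_eq_add_one_or_of_prefix (t : Fin k)
    (hx : ∀ i : Fin k, i.val ≤ t.val → (x i).val = 0)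
    (hy : ∀ i : Fin k, i.val ≤ t.val → (y i).val ≠ 0)
    (hxy : ∀ i : Fin k, t.val < i.val → x i = y i) :
    altNum n k x = altNum n k y + 1 ∨ altNum n k y = altNum n k x + 1 := by
  have hx' : ∀ j ≤ t.val, extVal n k x j = 0 := fun j hj => by
    rw [extVal_of_lt (by omega)]
    exact hx _ hj
  have hy' : ∀ j ≤ t.val, extVal n k y j ≠ 0 := fun j hj => by
    rw [extVal_of_lt (by omega)]
    exact hy _ hj
  have hxy' : ∀ j, t.val < j → extVal n k x j = extVal n k y j :=
    fun j => extVal_eq_of_forall_lt hxy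
  simp only [altNum_eq_card_filter_isAltAt]
  refine card_filter_eq_add_one_or (mem_range.2 t.isLt) (fun j _ hjt => ?_) ?_
  · rcases Nat.lt_or_gt_of_ne hjt with hlt | hgt
    · exact iff_of_false (not_isAltAt_of_eq_zero (hx' j hlt.le) (hx' (j + 1) hlt))
        (not_isAltAt_of_ne_zero (hy' j hlt.le) (hy' (j + 1) hlt))
    · exact isAltAt_congr (by rw [hxy' j hgt]) (by rw [hxy' (j + 1) (by omega)])
  · exact isAltAt_iff_not (hx' t le_rfl) (hy' t le_rfl) (by rw [hxy' _ t.val.lt_succ_self])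

end Alternation

/-- How the alternating number changes along an edge of `H_{n_1,…,n_k}`,
according to which adjacency rule produced the edge. -/
theorem stmt_2 (n : ℕ → ℕ) (k : ℕ) (hk : 1 ≤ k)
    (x y : ∀ i : Fin k, Fin (n i)) :
    -- (a) rule (A1): `x` and `y` differ exactly in the first coordinate
    ((x ⟨0, by omega⟩ ≠ y ⟨0, by omega⟩ ∧ ∀ i : Fin k, 0 < i.val → x i = y i) →
      ((((x ⟨0, by omega⟩).val = 0 ∧ (y ⟨0, by omega⟩).val ≠ 0) ∨
        ((x ⟨0, by omega⟩).val ≠ 0 ∧ (y ⟨0, by omega⟩).val = 0)) →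
          (altNum n k x = altNum n k y + 1 ∨ altNum n k y = altNum n k x + 1)) ∧
      (((x ⟨0, by omega⟩).val ≠ 0 ∧ (y ⟨0, by omega⟩).val ≠ 0) →
          altNum n k x = altNum n k y)) ∧
    -- (b) rule (A2): `x` starts with `j+1` zeros, `y` with `j+1` nonzeros, rest equal
    (∀ j : Fin k,
      ((∀ i : Fin k, i.val ≤ j.val → (x i).val = 0) ∧
       (∀ i : Fin k, i.val ≤ j.val → (y i).val ≠ 0) ∧
       (∀ i : Fin k, j.val < i.val → x i = y i)) →
      (altNum n k x = altNum n k y + 1 ∨ altNum n k y = altNum n k x + 1)) ∧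
    -- (c) rule (A3)
    (∀ m : Fin k,
      (0 < m.val ∧ (∀ i : Fin k, i.val < m.val → (x i).val = 0 ∧ (y i).val = 0) ∧
       (x m).val ≠ 0 ∧ (y m).val ≠ 0 ∧ x m ≠ y m ∧
       (∀ i : Fin k, m.val < i.val → x i = y i)) →
      altNum n k x = altNum n k y) := by
  set o : Fin k := ⟨0, by omega⟩
  have hle_o : ∀ i : Fin k, i.val ≤ 0 → i = o := fun i hi => Fin.ext (by simp [o]; omega)
  refine ⟨fun ⟨_, htail⟩ => ⟨?_, ?_⟩, fun j ⟨hx, hy, hxy⟩ => ?_, ?_⟩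
  · rintro (⟨hx, hy⟩ | ⟨hx, hy⟩)
    · exact altNum_eq_add_one_or_of_prefix o (fun i hi => hle_o i hi ▸ hx)
        (fun i hi => hle_o i hi ▸ hy) htail
    · exact (altNum_eq_add_one_or_of_prefix o (fun i hi => hle_o i hi ▸ hy)
        (fun i hi => hle_o i hi ▸ hx) fun i hi => (htail i hi).symm).symm
  · rintro ⟨hx, hy⟩
    refine altNum_eq_of_forall_eq_zero_iff fun i => ?_
    rcases Nat.eq_zero_or_pos i.val with h | h
    · rw [hle_o i h.le]
      exact iff_of_false hx hy
    · rw [htail i h]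
  · exact altNum_eq_add_one_or_of_prefix j hx hy hxy
  · rintro m ⟨-, hpre, hxm, hym, -, hxy⟩
    refine altNum_eq_of_forall_eq_zero_iff fun i => ?_
    rcases lt_trichotomy i.val m.val with h | h | h
    · exact iff_of_true (hpre i h).1 (hpre i h).2
    · rw [Fin.ext h]
      exact iff_of_false hxm hym
    · rw [hxy i h]
end

section
/- Let x be any vertex of the hierarchical graph H_{n_1,…,n_k} and let r = 00…0 be the root (the all-zero string). Then the graph distance from x to r equals alt(x). -/
theorem SimpleGraph.Walk.le_add_length_of_adj {V : Type*} {G : SimpleGraph V} {f : V → ℕ}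
    (hadj : ∀ v w, G.Adj v w → f v ≤ f w + 1) {u w : V} (p : G.Walk u w) :
    f u ≤ f w + p.length := by
  induction p with
  | nil => simp
  | cons h _ ih => have := hadj _ _ h; rw [SimpleGraph.Walk.length_cons]; omega

theorem SimpleGraph.exists_walk_length_le_of_descent {V : Type*} {G : SimpleGraph V}
    (f : V → ℕ) {r : V} (hzero : ∀ v, f v = 0 → v = r)
    (hdesc : ∀ v, f v ≠ 0 → ∃ w, G.Adj v w ∧ f w < f v) (v : V) :
    ∃ p : G.Walk v r, p.length ≤ f v := by
  induction hv : f v using Nat.strong_induction_on generalizing v with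
  | _ N ih =>
    by_cases hv0 : f v = 0
    · obtain rfl := hzero v hv0
      exact ⟨.nil, by simp⟩
    obtain ⟨w, hvw, hw⟩ := hdesc v hv0
    obtain ⟨p, hp⟩ := ih (f w) (hv ▸ hw) w rfl
    exact ⟨.cons hvw p, by rw [SimpleGraph.Walk.length_cons]; omega⟩

theorem SimpleGraph.dist_eq_of_potential {V : Type*} {G : SimpleGraph V} (f : V → ℕ) {r : V}
    (hzero : ∀ v, f v = 0 ↔ v = r) (hadj : ∀ v w, G.Adj v w → f v ≤ f w + 1)
    (hdesc : ∀ v, f v ≠ 0 → ∃ w, G.Adj v w ∧ f w < f v) (v : V) :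
    G.dist v r = f v := by
  obtain ⟨p, hp⟩ := exists_walk_length_le_of_descent f (fun v => (hzero v).1) hdesc v
  obtain ⟨q, hq⟩ := SimpleGraph.Reachable.exists_walk_length_eq_dist ⟨p⟩
  have hr : f r = 0 := (hzero r).2 rfl
  have hlb := q.le_add_length_of_adj hadj
  rw [hr, hq, zero_add] at hlb
  exact le_antisymm ((SimpleGraph.dist_le p).trans hp) hlb

lemma iff_zero_of_iff_succ {Z : ℕ → Prop} {t : ℕ} (h : ∀ p < t, (Z p ↔ Z (p + 1))) :
    ∀ p ≤ t, (Z p ↔ Z 0) := by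
  intro p hp
  induction p with
  | zero => rfl
  | succ p ih => exact (h p (by omega)).symm.trans (ih (by omega))

namespace HierGraph

variable {n : ℕ → ℕ} {k : ℕ}

def altSet (x : ∀ i : Fin k, Fin (n i)) : Finset ℕ :=
  (Finset.range k).filter fun j => ¬(extVal n k x j = 0 ↔ extVal n k x (j + 1) = 0)

lemma altNum_eq_card_altSet (x : ∀ i : Fin k, Fin (n i)) :
    altNum n k x = (altSet x).card := by
  unfold altNum altSet
  congr 1
  refine Finset.filter_congr fun j _ => ?_
  tauto

lemma mem_altSet {x : ∀ i : Fin k, Fin (n i)} {p : ℕ} :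
    p ∈ altSet x ↔ p < k ∧ ¬(extVal n k x p = 0 ↔ extVal n k x (p + 1) = 0) := by
  simp [altSet]

lemma extVal_of_lt (x : ∀ i : Fin k, Fin (n i)) {j : ℕ} (h : j < k) :
    extVal n k x j = (x ⟨j, h⟩).val := dif_pos h

lemma extVal_of_le (x : ∀ i : Fin k, Fin (n i)) {j : ℕ} (h : k ≤ j) :
    extVal n k x j = 0 := dif_neg (by omega)

lemma forall_extVal_of_forall {x : ∀ i : Fin k, Fin (n i)} {P : ℕ → Prop} (j : Fin k)
    (h : ∀ i : Fin k, i.val ≤ j.val → P (x i).val) : ∀ i ≤ j.val, P (extVal n k x i) := by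
  intro i hi
  rw [extVal_of_lt x (by omega)]
  exact h _ hi

lemma extVal_eq_of_agree {x y : ∀ i : Fin k, Fin (n i)} {j : ℕ}
    (h : ∀ i : Fin k, j < i.val → x i = y i) {p : ℕ} (hp : j < p) :
    extVal n k x p = extVal n k y p := by
  unfold extVal
  split
  · next hpk => rw [h ⟨p, hpk⟩ hp]
  · rfl

section Alternations

variable {x y : ∀ i : Fin k, Fin (n i)} {j p : ℕ}

lemma mem_altSet_iff_of_gt (h : ∀ i, j < i → (extVal n k x i = 0 ↔ extVal n k y i = 0))
    (hp : j < p) : p ∈ altSet x ↔ p ∈ altSet y := by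
  rw [mem_altSet, mem_altSet, h p hp, h (p + 1) (by omega)]

lemma mem_altSet_iff_of_lt (h : ∀ i ≤ j, (extVal n k x i = 0 ↔ ¬extVal n k y i = 0))
    (hp : p < j) : p ∈ altSet x ↔ p ∈ altSet y := by
  rw [mem_altSet, mem_altSet, h p (by omega), h (p + 1) (by omega), not_iff_not]

lemma mem_altSet_iff_of_ne (hle : ∀ i ≤ j, (extVal n k x i = 0 ↔ ¬extVal n k y i = 0))
    (hgt : ∀ i, j < i → (extVal n k x i = 0 ↔ extVal n k y i = 0)) (hp : p ≠ j) :
    p ∈ altSet x ↔ p ∈ altSet y :=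
  (lt_or_gt_of_ne hp).elim (mem_altSet_iff_of_lt hle) (mem_altSet_iff_of_gt hgt)

lemma exists_mem_altSet_iff_of_adj (h : HierAdj n k x y) :
    ∃ j, ∀ p ≠ j, (p ∈ altSet x ↔ p ∈ altSet y) := by
  obtain ⟨-, h1 | ⟨j, hpre, hgt⟩ | ⟨m, hm, hpre, hxm, hym, -, hgt⟩⟩ := h
  · refine ⟨0, fun p hp => mem_altSet_iff_of_gt (fun i hi => ?_) (Nat.pos_of_ne_zero hp)⟩
    rw [extVal_eq_of_agree h1 hi]
  · have hgt' : ∀ i, j.val < i → (extVal n k x i = 0 ↔ extVal n k y i = 0) := fun i hi => by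
      rw [extVal_eq_of_agree hgt hi]
    refine ⟨j.val, fun p hp => mem_altSet_iff_of_ne (fun i hi => ?_) hgt' hp⟩
    rcases hpre with ⟨hx, hy⟩ | ⟨hy, hx⟩
    · exact iff_of_true (forall_extVal_of_forall (P := (· = 0)) j hx i hi)
        (forall_extVal_of_forall (P := (· ≠ 0)) j hy i hi)
    · exact iff_of_false (forall_extVal_of_forall (P := (· ≠ 0)) j hx i hi)
        (not_not.2 (forall_extVal_of_forall (P := (· = 0)) j hy i hi))
  · refine ⟨0, fun p hp => mem_altSet_iff_of_gt (fun i _ => ?_) (Nat.pos_of_ne_zero hp)⟩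
    rcases lt_trichotomy i m.val with hi | rfl | hi
    · have hik : i < k := by omega
      simp [extVal_of_lt _ hik, (hpre ⟨i, hik⟩ hi).1, (hpre ⟨i, hik⟩ hi).2]
    · simp [extVal_of_lt _ m.isLt, hxm, hym]
    · rw [extVal_eq_of_agree hgt hi]

lemma altNum_le_add_one_of_adj (h : HierAdj n k x y) : altNum n k x ≤ altNum n k y + 1 := by
  obtain ⟨j, hj⟩ := exists_mem_altSet_iff_of_adj h
  have hsub : altSet x ⊆ insert j (altSet y) := fun p hp => by
    by_cases hpj : p = j
    · exact Finset.mem_insert.2 (Or.inl hpj)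
    · exact Finset.mem_insert_of_mem ((hj p hpj).1 hp)
  rw [altNum_eq_card_altSet, altNum_eq_card_altSet]
  exact (Finset.card_le_card hsub).trans (Finset.card_insert_le _ _)

end Alternations

section Root

variable {r : ∀ i : Fin k, Fin (n i)}

lemma altNum_eq_zero_iff (hr : ∀ i, (r i).val = 0) {x : ∀ i : Fin k, Fin (n i)} :
    altNum n k x = 0 ↔ x = r := by
  have hrz : ∀ p, extVal n k r p = 0 := fun p => by
    unfold extVal; split <;> simp [hr]
  rw [altNum_eq_card_altSet, Finset.card_eq_zero, Finset.eq_empty_iff_forall_notMem]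
  constructor
  · intro h
    have hconst := iff_zero_of_iff_succ (Z := fun p => extVal n k x p = 0) (t := k)
      fun p hp => by simpa [mem_altSet, hp] using h p
    funext i
    have hi := (hconst i.val i.isLt.le).trans (hconst k le_rfl).symm
    rw [extVal_of_lt x i.isLt] at hi
    exact Fin.ext ((hi.2 (extVal_of_le x le_rfl)).trans (hr i).symm)
  · rintro rfl p
    simp [mem_altSet, hrz]

def replacePrefix (x v : ∀ i : Fin k, Fin (n i)) (t : ℕ) : ∀ i : Fin k, Fin (n i) :=
  fun i => if i.val ≤ t then v i else x i

lemma hierAdj_of_prefix_compl {x y : ∀ i : Fin k, Fin (n i)} (t : Fin k)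
    (hx : ∀ i ≤ t.val, (extVal n k x i = 0 ↔ extVal n k x 0 = 0))
    (hy : ∀ i ≤ t.val, (extVal n k y i = 0 ↔ ¬extVal n k x 0 = 0))
    (hgt : ∀ i : Fin k, t.val < i.val → x i = y i) : HierAdj n k x y := by
  have hx' : ∀ i : Fin k, i.val ≤ t → ((x i).val = 0 ↔ extVal n k x 0 = 0) := fun i hi => by
    simpa [extVal_of_lt _ i.isLt] using hx i hi
  have hy' : ∀ i : Fin k, i.val ≤ t → ((y i).val = 0 ↔ ¬extVal n k x 0 = 0) := fun i hi => by
    simpa [extVal_of_lt _ i.isLt] using hy i hi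
  refine ⟨fun hxy => ?_, Or.inr (Or.inl ⟨t, ?_, hgt⟩)⟩
  · have := hy 0 (Nat.zero_le _)
    rw [← hxy] at this
    tauto
  · by_cases h0 : extVal n k x 0 = 0
    · exact Or.inl ⟨fun i hi => (hx' i hi).2 h0, fun i hi => (hy' i hi).not.2 (not_not.2 h0)⟩
    · exact Or.inr ⟨fun i hi => (hy' i hi).2 h0, fun i hi => (hx' i hi).not.2 h0⟩

lemma extVal_eq_zero_iff_of_le_min' {x : ∀ i : Fin k, Fin (n i)} (hne : (altSet x).Nonempty)
    {p : ℕ} (hp : p ≤ (altSet x).min' hne) : extVal n k x p = 0 ↔ extVal n k x 0 = 0 := by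
  have htk := (mem_altSet.1 ((altSet x).min'_mem hne)).1
  refine iff_zero_of_iff_succ (Z := fun p => extVal n k x p = 0) (fun q hq => ?_) p hp
  have hqn : q ∉ altSet x := fun hqm => ((altSet x).min'_le q hqm).not_gt hq
  simpa [mem_altSet, show q < k by omega] using hqn

lemma exists_adj_altNum_lt (hr : ∀ i, (r i).val = 0) {o : ∀ i : Fin k, Fin (n i)}
    (ho : ∀ i, (o i).val ≠ 0) {x : ∀ i : Fin k, Fin (n i)} (hx : altNum n k x ≠ 0) :
    ∃ y, HierAdj n k x y ∧ altNum n k y < altNum n k x := by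
  simp only [altNum_eq_card_altSet] at hx ⊢
  have hne : (altSet x).Nonempty := Finset.card_ne_zero.1 hx
  set t := (altSet x).min' hne
  have htmem : t ∈ altSet x := Finset.min'_mem _ _
  obtain ⟨htk, htalt⟩ := mem_altSet.1 htmem
  have hconst : ∀ p ≤ t, (extVal n k x p = 0 ↔ extVal n k x 0 = 0) :=
    fun p hp => extVal_eq_zero_iff_of_le_min' hne hp
  set y := replacePrefix x (if extVal n k x 0 = 0 then o else r) t
  have hyle : ∀ i ≤ t, (extVal n k y i = 0 ↔ ¬extVal n k x 0 = 0) := fun i hi => by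
    rw [extVal_of_lt y (by omega)]
    by_cases h0 : extVal n k x 0 = 0 <;> simp [y, replacePrefix, hi, h0, ho, hr]
  have hygt : ∀ i : Fin k, t < i.val → x i = y i := fun i hi => by
    simp [y, replacePrefix, show ¬i.val ≤ t by omega]
  have hle : ∀ i ≤ t, (extVal n k x i = 0 ↔ ¬extVal n k y i = 0) := fun i hi => by
    rw [hyle i hi, not_not, hconst i hi]
  have hgt : ∀ i, t < i → (extVal n k x i = 0 ↔ extVal n k y i = 0) := fun i hi => by
    rw [extVal_eq_of_agree hygt hi]
  have hty : t ∉ altSet y := fun hmem => by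
    rw [mem_altSet, ← hgt (t + 1) (by omega), hyle t le_rfl, ← hconst t le_rfl] at hmem
    tauto
  have hsub : altSet y ⊆ (altSet x).erase t := fun p hp => by
    have hpt : p ≠ t := fun h => hty (h ▸ hp)
    exact Finset.mem_erase.2 ⟨hpt, (mem_altSet_iff_of_ne hle hgt hpt).2 hp⟩
  refine ⟨y, hierAdj_of_prefix_compl ⟨t, htk⟩ hconst hyle hygt, ?_⟩
  exact (Finset.card_le_card hsub).trans_lt (Finset.card_erase_lt_of_mem htmem)

end Root

end HierGraph

open HierGraph in
theorem stmt_4_general (n : ℕ → ℕ) (k : ℕ) (hn : ∀ i < k, 2 ≤ n i)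
    (x r : ∀ i : Fin k, Fin (n i)) (hr : ∀ i, (r i).val = 0) :
    (hierGraph n k).dist x r = altNum n k x :=
  SimpleGraph.dist_eq_of_potential (altNum n k) (fun _ => altNum_eq_zero_iff hr)
    (fun _ _ => altNum_le_add_one_of_adj)
    (fun _ => exists_adj_altNum_lt hr (o := fun i => ⟨1, hn i i.isLt⟩) fun _ => one_ne_zero) x

/-- The distance from any vertex `x` to the root `r = 00…0` equals `alt(x)`. -/
theorem stmt_4 (n : ℕ → ℕ) (k : ℕ) (hk : 1 ≤ k) (hn : ∀ i < k, 2 ≤ n i)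
    (x r : ∀ i : Fin k, Fin (n i)) (hr : ∀ i, (r i).val = 0) :
    (hierGraph n k).dist x r = altNum n k x :=
  stmt_4_general n k hn x r hr
end

section
/- Let k ≥ 2 and let x = x_1…x_k and y = y_1…y_k be vertices of the hierarchical graph H_{n_1,…,n_k} with x_k ≠ y_k (no common suffix). Suppose x_k ≠ 0 and y_k ≠ 0, and that the maximal uniform suffix u of x and the maximal uniform suffix v of y both have length greater than 1 (equivalently, x_{k−1} ≠ 0 and y_{k−1} ≠ 0). Then the graph distance satisfies dist(x,y) = alt(x) + alt(y). -/
/-! Upper bound: flipping the maximal uniform prefix of a vertex `z ≠ 0` between zero and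
nonzero is an (A2)-edge that lowers `alt z` by one, so `z` reaches `0` in `alt z` steps.
Lower bound: the alternating number of the prefix `x_1 … x_{k-1}` changes by at most one along
every edge, and a walk from `x` to `y` must use an edge changing the last coordinate; such an
edge joins two vertices with uniform prefixes of length `k - 1`, whose prefix alternating
numbers sum to at most one. When `x_{k-1}, x_k ≠ 0` the prefix alternating number equals
`alt x`. -/

namespace HierarchicalGraph

open Finset

open Classical in
noncomputable def switchCount (p : ℕ → Prop) (m : ℕ) : ℕ :=
  #{j ∈ range m | ¬(p j ↔ p (j + 1))}

section SwitchCount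

open Classical

variable {p q : ℕ → Prop} {m t : ℕ}

lemma switchCount_congr (h : ∀ j ≤ m, (p j ↔ q j)) : switchCount p m = switchCount q m := by
  unfold switchCount
  congr 1
  refine filter_congr fun j hj => ?_
  have := mem_range.1 hj
  rw [h j (by omega), h (j + 1) (by omega)]

lemma switchCount_succ (p : ℕ → Prop) (m : ℕ) :
    switchCount p (m + 1) = switchCount p m + if (p m ↔ p (m + 1)) then 0 else 1 := by
  unfold switchCount
  rw [range_add_one, filter_insert]
  split_ifs with h
  · simp
  · rw [card_insert_of_notMem (by simp)]

lemma switchCount_eq_zero_of_forall (h : ∀ j, p j) : switchCount p m = 0 := by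
  simp [switchCount, h]

lemma switchCount_threshold_le_one (a m : ℕ) : switchCount (fun j => a ≤ j) m ≤ 1 := by
  refine card_le_one.2 fun i hi j hj => ?_
  simp only [mem_filter, mem_range] at hi hj
  omega

lemma switchCount_le_succ (hp : ∀ j < t, (p j ↔ p (j + 1)))
    (hpq : ∀ j, t < j → (p j ↔ q j)) : switchCount p m ≤ switchCount q m + 1 := by
  unfold switchCount
  refine (card_le_card fun j hj => ?_).trans (card_insert_le t _)
  simp only [mem_filter, mem_range, mem_insert] at hj ⊢
  rcases lt_trichotomy j t with hjt | rfl | hjt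
  · exact absurd (hp j hjt) hj.2
  · exact Or.inl rfl
  · exact Or.inr ⟨hj.1, by rw [← hpq j hjt, ← hpq (j + 1) (by omega)]; exact hj.2⟩

lemma switchCount_eq_succ_of_flip (htm : t < m) (hp : ∀ j < t, (p j ↔ p (j + 1)))
    (hpt : ¬(p t ↔ p (t + 1))) (hle : ∀ j ≤ t, (q j ↔ ¬p j))
    (hgt : ∀ j, t < j → (q j ↔ p j)) :
    switchCount p m = switchCount q m + 1 := by
  unfold switchCount
  have hq_t : q t ↔ q (t + 1) := by rw [hle t le_rfl, hgt (t + 1) (by omega)]; tauto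
  rw [← card_insert_of_notMem (s := {j ∈ range m | ¬(q j ↔ q (j + 1))}) (a := t)
    (by simp [hq_t])]
  congr 1
  ext j
  simp only [mem_filter, mem_range, mem_insert]
  rcases lt_trichotomy j t with hjt | rfl | hjt
  · rw [hle j hjt.le, hle (j + 1) hjt]
    have := hp j hjt
    constructor <;> rintro (h | h) <;> first | omega | tauto
  · exact ⟨fun _ => Or.inl rfl, fun _ => ⟨htm, hpt⟩⟩
  · rw [hgt j hjt, hgt (j + 1) (by omega)]
    constructor
    · exact Or.inr
    · rintro (rfl | h)
      · omega
      · exact h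

lemma iff_zero_of_forall_lt_iff_succ (h : ∀ j < t, (p j ↔ p (j + 1))) :
    ∀ j ≤ t, (p j ↔ p 0) := by
  intro j hj
  induction j with
  | zero => rfl
  | succ j ih => rw [← h j (by omega), ih (by omega)]

lemma exists_not_iff_succ {a b : ℕ} (h : ¬(p a ↔ p b)) : ∃ j, ¬(p j ↔ p (j + 1)) := by
  by_contra! hc
  have hp := iff_zero_of_forall_lt_iff_succ (t := max a b) fun j _ => hc j
  exact h ((hp a (le_max_left a b)).trans (hp b (le_max_right a b)).symm)

end SwitchCount

section Vertices

variable {n : ℕ → ℕ} {k : ℕ}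

/-- Positions `j ≥ k` count as zero, matching the convention `x_{k+1} = 0`. -/
def zeroAt (x : ∀ i : Fin k, Fin (n i)) (j : ℕ) : Prop :=
  ∀ h : j < k, (x ⟨j, h⟩).val = 0

lemma zeroAt_of_le (x : ∀ i : Fin k, Fin (n i)) {j : ℕ} (h : k ≤ j) : zeroAt x j :=
  fun h' => absurd h' (by omega)

lemma zeroAt_coe_iff (x : ∀ i : Fin k, Fin (n i)) (i : Fin k) :
    zeroAt x i ↔ (x i).val = 0 :=
  ⟨fun h => h i.2, fun h _ => h⟩

lemma extVal_eq_zero_iff (x : ∀ i : Fin k, Fin (n i)) (j : ℕ) :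
    extVal n k x j = 0 ↔ zeroAt x j := by
  unfold extVal
  split_ifs with h
  · exact ⟨fun e _ => e, fun e => e h⟩
  · exact iff_of_true rfl (zeroAt_of_le x (by omega))

lemma altNum_eq_switchCount (x : ∀ i : Fin k, Fin (n i)) :
    altNum n k x = switchCount (zeroAt x) k := by
  classical
  unfold altNum switchCount
  congr 1
  refine filter_congr fun j _ => ?_
  simp only [ne_eq, extVal_eq_zero_iff]
  tauto

lemma zeroAt_iff_of_eq_above {x y : ∀ i : Fin k, Fin (n i)} {t : ℕ}
    (h : ∀ i : Fin k, t < i.val → x i = y i) {j : ℕ} (hj : t < j) :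
    zeroAt x j ↔ zeroAt y j :=
  forall_congr' fun hjk => by rw [h ⟨j, hjk⟩ hj]

lemma _root_.HierAdj.exists_zeroAt_pattern {x y : ∀ i : Fin k, Fin (n i)}
    (h : HierAdj n k x y) :
    ∃ t, (∀ j < t, (zeroAt x j ↔ zeroAt x (j + 1))) ∧
      ∀ j, t < j → (zeroAt x j ↔ zeroAt y j) := by
  obtain ⟨-, hsuf | ⟨t, hpre, hsuf⟩ | ⟨t, -, hpre, hxt, hyt, -, hsuf⟩⟩ := h
  · exact ⟨0, by omega, fun j => zeroAt_iff_of_eq_above hsuf⟩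
  · refine ⟨t, fun j hj => ?_, fun j => zeroAt_iff_of_eq_above hsuf⟩
    rcases hpre with ⟨hx, -⟩ | ⟨-, hx⟩
    · exact iff_of_true (fun _ => hx _ (by simp; omega)) (fun _ => hx _ (by simp; omega))
    · exact iff_of_false (fun h0 => hx ⟨j, by omega⟩ (by simp; omega) (h0 _))
        (fun h0 => hx ⟨j + 1, by omega⟩ (by simp; omega) (h0 _))
  · refine ⟨t - 1, fun j hj => ?_, fun j hj => ?_⟩
    · exact iff_of_true (fun _ => (hpre _ (by simp; omega)).1)
        (fun _ => (hpre _ (by simp; omega)).1)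
    · rcases (show j = t ∨ t < j by omega) with rfl | htj
      · exact iff_of_false (fun h0 => hxt (h0 _)) (fun h0 => hyt (h0 _))
      · exact zeroAt_iff_of_eq_above hsuf htj

/-- The alternating number of the prefix `x_1 … x_m`; the disjunct `m ≤ j` is its convention
`x_{m+1} = 0`. -/
noncomputable def prefixAlt (x : ∀ i : Fin k, Fin (n i)) (m : ℕ) : ℕ :=
  switchCount (fun j => m ≤ j ∨ zeroAt x j) m

lemma prefixAlt_le_of_adj {x y : ∀ i : Fin k, Fin (n i)} (h : HierAdj n k x y) (m : ℕ) :
    prefixAlt x m ≤ prefixAlt y m + 1 := by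
  obtain ⟨t, hconst, habove⟩ := h.exists_zeroAt_pattern
  refine switchCount_le_succ (t := min t (m - 1)) (fun j hj => ?_) (fun j hj => ?_)
  · simp only [show ¬m ≤ j by omega, show ¬m ≤ j + 1 by omega, false_or]
    exact hconst j (by omega)
  · rcases le_or_gt m j with hmj | hmj
    · exact iff_of_true (Or.inl hmj) (Or.inl hmj)
    · exact or_congr_right (habove j (by omega))

lemma prefixAlt_le_add_length {x y : ∀ i : Fin k, Fin (n i)} (W : (hierGraph n k).Walk x y)
    (m : ℕ) : prefixAlt x m ≤ prefixAlt y m + W.length := by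
  induction W with
  | nil => simp
  | cons h _ ih =>
    have := prefixAlt_le_of_adj h m
    rw [SimpleGraph.Walk.length_cons]
    omega

lemma prefixAlt_eq_zero {x : ∀ i : Fin k, Fin (n i)} {m : ℕ}
    (hx : ∀ i : Fin k, i.val < m → (x i).val = 0) : prefixAlt x m = 0 :=
  switchCount_eq_zero_of_forall fun j =>
    (le_or_gt m j).imp id fun hjm hjk => hx ⟨j, hjk⟩ hjm

lemma prefixAlt_le_one {x : ∀ i : Fin k, Fin (n i)} {m : ℕ} (hm : m ≤ k)
    (hx : ∀ i : Fin k, i.val < m → (x i).val ≠ 0) : prefixAlt x m ≤ 1 := by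
  unfold prefixAlt
  rw [switchCount_congr (q := fun j => m ≤ j) fun j _ => or_iff_left_of_imp fun h0 => ?_]
  · exact switchCount_threshold_le_one m m
  · by_contra hjm
    exact hx ⟨j, by omega⟩ (by simp; omega) (h0 _)

lemma prefixAlt_add_le_one_of_adj (hk : 2 ≤ k) {x y : ∀ i : Fin k, Fin (n i)}
    (h : HierAdj n k x y)
    (hlast : x ⟨k - 1, Nat.sub_one_lt_of_lt hk⟩ ≠ y ⟨k - 1, Nat.sub_one_lt_of_lt hk⟩) :
    prefixAlt x (k - 1) + prefixAlt y (k - 1) ≤ 1 := by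
  obtain ⟨-, hsuf | ⟨t, hpre, hsuf⟩ | ⟨t, -, hpre, -, -, -, hsuf⟩⟩ := h
  · exact absurd (hsuf _ (by simp; omega)) hlast
  · have ht : k - 1 ≤ t.val := by_contra fun ht => hlast (hsuf _ (by simp; omega))
    rcases hpre with ⟨hx, hy⟩ | ⟨hy, hx⟩
    · rw [prefixAlt_eq_zero fun i hi => hx i (by omega)]
      have := prefixAlt_le_one (m := k - 1) (by omega) fun i hi => hy i (by omega)
      omega
    · rw [prefixAlt_eq_zero fun i hi => hy i (by omega)]
      exact prefixAlt_le_one (by omega) fun i hi => hx i (by omega)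
  · have ht : k - 1 ≤ t.val := by_contra fun ht => hlast (hsuf _ (by simp; omega))
    rw [prefixAlt_eq_zero fun i hi => (hpre i (by omega)).1,
      prefixAlt_eq_zero fun i hi => (hpre i (by omega)).2]
    omega

lemma prefixAlt_add_le_length (hk : 2 ≤ k) {x y : ∀ i : Fin k, Fin (n i)}
    (W : (hierGraph n k).Walk x y)
    (hlast : x ⟨k - 1, Nat.sub_one_lt_of_lt hk⟩ ≠ y ⟨k - 1, Nat.sub_one_lt_of_lt hk⟩) :
    prefixAlt x (k - 1) + prefixAlt y (k - 1) ≤ W.length := by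
  induction W with
  | nil => exact absurd rfl hlast
  | @cons u v w h W ih =>
    rw [SimpleGraph.Walk.length_cons]
    by_cases hstep : u ⟨k - 1, Nat.sub_one_lt_of_lt hk⟩ = v ⟨k - 1, Nat.sub_one_lt_of_lt hk⟩
    · have := ih (hstep ▸ hlast)
      have := prefixAlt_le_of_adj h (k - 1)
      omega
    · have := prefixAlt_add_le_one_of_adj hk h hstep
      have := prefixAlt_le_add_length W.reverse (k - 1)
      rw [SimpleGraph.Walk.length_reverse] at this
      omega

lemma prefixAlt_pred_eq_altNum (hk : 2 ≤ k) {x : ∀ i : Fin k, Fin (n i)}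
    (h₁ : ¬zeroAt x (k - 1)) (h₂ : ¬zeroAt x (k - 2)) :
    prefixAlt x (k - 1) = altNum n k x := by
  obtain ⟨K, rfl⟩ : ∃ K, k = K + 2 := ⟨k - 2, by omega⟩
  simp only [show K + 2 - 1 = K + 1 by omega, add_tsub_cancel_right] at h₁ h₂ ⊢
  rw [altNum_eq_switchCount, prefixAlt, switchCount_succ, switchCount_succ, switchCount_succ,
    switchCount_congr (q := zeroAt x) fun j hj => by
      simp only [show ¬K + 1 ≤ j by omega, false_or]]
  simp [h₁, h₂, zeroAt_of_le x (le_refl (K + 2))]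

end Vertices

section Descent

variable {n : ℕ → ℕ} {k : ℕ}

def zeroVertex (hn : ∀ i < k, 0 < n i) : ∀ i : Fin k, Fin (n i) :=
  fun i => ⟨0, hn i i.2⟩

def toggle {m : ℕ} (hm : 2 ≤ m) (a : Fin m) : Fin m :=
  if a.val = 0 then ⟨1, hm⟩ else ⟨0, by omega⟩

lemma toggle_val_eq_zero_iff {m : ℕ} (hm : 2 ≤ m) (a : Fin m) :
    (toggle hm a).val = 0 ↔ a.val ≠ 0 := by
  unfold toggle
  split_ifs with h <;> simp [h]

def flipPrefix (hn : ∀ i < k, 2 ≤ n i) (z : ∀ i : Fin k, Fin (n i)) (t : ℕ) :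
    ∀ i : Fin k, Fin (n i) :=
  fun i => if i.val ≤ t then toggle (hn i i.2) (z i) else z i

variable (hn : ∀ i < k, 2 ≤ n i) (z : ∀ i : Fin k, Fin (n i)) {t j : ℕ}

lemma zeroAt_flipPrefix_of_le (hjt : j ≤ t) (hjk : j < k) :
    zeroAt (flipPrefix hn z t) j ↔ ¬zeroAt z j := by
  rw [zeroAt_coe_iff _ ⟨j, hjk⟩, zeroAt_coe_iff _ ⟨j, hjk⟩, flipPrefix, if_pos hjt,
    toggle_val_eq_zero_iff]

lemma zeroAt_flipPrefix_of_lt (htj : t < j) : zeroAt (flipPrefix hn z t) j ↔ zeroAt z j :=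
  zeroAt_iff_of_eq_above (fun i hi => if_neg (by omega)) htj

lemma exists_adj_altNum_eq_succ
    (hz : z ≠ zeroVertex fun i hi => zero_lt_two.trans_le (hn i hi)) :
    ∃ w, (hierGraph n k).Adj z w ∧ altNum n k z = altNum n k w + 1 := by
  classical
  have hex : ∃ j, ¬(zeroAt z j ↔ zeroAt z (j + 1)) := by
    obtain ⟨i, hi⟩ : ∃ i, (z i).val ≠ 0 := by
      by_contra! h
      exact hz (funext fun i => Fin.ext (h i))
    exact exists_not_iff_succ (a := i) (b := k) fun h =>
      hi ((zeroAt_coe_iff z i).1 (h.2 (zeroAt_of_le z le_rfl)))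
  set t := Nat.find hex
  have hsw : ¬(zeroAt z t ↔ zeroAt z (t + 1)) := Nat.find_spec hex
  have hbelow : ∀ j < t, (zeroAt z j ↔ zeroAt z (j + 1)) := fun j hj =>
    not_not.1 (Nat.find_min hex hj)
  have htk : t < k := by
    by_contra htk
    exact hsw (iff_of_true (zeroAt_of_le z (by omega)) (zeroAt_of_le z (by omega)))
  have hconst := iff_zero_of_forall_lt_iff_succ hbelow
  have hflip : ∀ i : Fin k, i.val ≤ t → (zeroAt (flipPrefix hn z t) i ↔ ¬zeroAt z i) :=
    fun i hi => zeroAt_flipPrefix_of_le hn z hi i.2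
  refine ⟨flipPrefix hn z t,
    ⟨fun h => ?_, Or.inr (Or.inl ⟨⟨t, htk⟩, ?_, fun i hi => ?_⟩)⟩, ?_⟩
  · have := zeroAt_flipPrefix_of_le hn z (Nat.zero_le t) (by omega)
    rw [← h] at this
    exact iff_not_self this
  · simp only [ne_eq, ← zeroAt_coe_iff]
    by_cases h0 : zeroAt z 0
    · exact Or.inl ⟨fun i hi => (hconst i hi).2 h0,
        fun i hi => (hflip i hi).not.2 (not_not.2 ((hconst i hi).2 h0))⟩
    · exact Or.inr ⟨fun i hi => (hflip i hi).2 fun h => h0 ((hconst i hi).1 h),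
        fun i hi h => h0 ((hconst i hi).1 h)⟩
  · exact (if_neg (by simp only at hi; omega)).symm
  · rw [altNum_eq_switchCount, altNum_eq_switchCount]
    exact switchCount_eq_succ_of_flip htk hbelow hsw
      (fun j hj => zeroAt_flipPrefix_of_le hn z hj (by omega))
      (fun j hj => zeroAt_flipPrefix_of_lt hn z hj)

lemma exists_walk_zeroVertex_length_le :
    ∃ W : (hierGraph n k).Walk z (zeroVertex fun i hi => zero_lt_two.trans_le (hn i hi)),
      W.length ≤ altNum n k z := by
  induction hN : altNum n k z using Nat.strong_induction_on generalizing z with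
  | _ N ih =>
    by_cases hz : z = zeroVertex fun i hi => zero_lt_two.trans_le (hn i hi)
    · subst hz
      exact ⟨SimpleGraph.Walk.nil, by simp⟩
    · obtain ⟨w, h, hw⟩ := exists_adj_altNum_eq_succ hn z hz
      obtain ⟨W, hW⟩ := ih _ (by omega) w rfl
      exact ⟨SimpleGraph.Walk.cons h W, by rw [SimpleGraph.Walk.length_cons]; omega⟩

end Descent

end HierarchicalGraph

open HierarchicalGraph in
/-- If `x_k ≠ y_k`, both `x_k, y_k` are nonzero, and the maximal uniform suffixes of `x`
and `y` both have length `> 1` (equivalently `x_{k-1} ≠ 0` and `y_{k-1} ≠ 0`), then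
`dist(x,y) = alt(x) + alt(y)`. -/
theorem stmt_6 (n : ℕ → ℕ) (k : ℕ) (hk : 2 ≤ k) (hn : ∀ i < k, 2 ≤ n i)
    (x y : ∀ i : Fin k, Fin (n i))
    (hne : x ⟨k - 1, by omega⟩ ≠ y ⟨k - 1, by omega⟩)
    (hxk : (x ⟨k - 1, by omega⟩).val ≠ 0) (hyk : (y ⟨k - 1, by omega⟩).val ≠ 0)
    (hxk1 : (x ⟨k - 2, by omega⟩).val ≠ 0) (hyk1 : (y ⟨k - 2, by omega⟩).val ≠ 0) :
    (hierGraph n k).dist x y = altNum n k x + altNum n k y := by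
  obtain ⟨Wx, hWx⟩ := exists_walk_zeroVertex_length_le hn x
  obtain ⟨Wy, hWy⟩ := exists_walk_zeroVertex_length_le hn y
  have hupper := SimpleGraph.dist_le (Wx.append Wy.reverse)
  rw [SimpleGraph.Walk.length_append, SimpleGraph.Walk.length_reverse] at hupper
  obtain ⟨P, hP⟩ := (Wx.append Wy.reverse).reachable.exists_walk_length_eq_dist
  have hlower := prefixAlt_add_le_length hk P hne
  rw [prefixAlt_pred_eq_altNum hk (fun h => hxk (h _)) (fun h => hxk1 (h _)),
    prefixAlt_pred_eq_altNum hk (fun h => hyk (h _)) (fun h => hyk1 (h _)), hP] at hlower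
  omega
end

section
/- Let k ≥ 1 and n_1,…,n_k be integers with each n_i ≥ 2. In the hierarchical graph H_{n_1,…,n_k}, the eccentricity of the root r = 00…0 equals k. -/
/-! The distance from the root to `x` is `altNum x`, the number of alternations between zero and
nonzero entries of `x_1 … x_k 0`. Each edge rule changes the zero/nonzero pattern only on an
initial block on which both endpoints are uniform, so `altNum` changes by at most one along an
edge; conversely, flipping the zero status of the first uniform block of any `x ≠ r` is an (A2)
edge that removes one alternation. Hence `dist r x = altNum x ≤ k`, with equality for the
alternating string. -/

section ChangeCount

variable {α : Type*}

lemma apply_eq_of_forall_lt_apply_succ {f : ℕ → α} {a : ℕ} (h : ∀ p < a, f p = f (p + 1))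
    {p : ℕ} (hp : p ≤ a) : f p = f a :=
  Nat.decreasingInduction (motive := fun m _ => f m = f a) (fun m hm ih => (h m hm).trans ih)
    rfl hp

variable [DecidableEq α]

def changeCount (f : ℕ → α) (k : ℕ) : ℕ :=
  ((Finset.range k).filter fun j => f j ≠ f (j + 1)).card

lemma changeCount_le (f : ℕ → α) (k : ℕ) : changeCount f k ≤ k :=
  (Finset.card_filter_le _ _).trans (Finset.card_range k).le

lemma changeCount_eq_self {f : ℕ → α} {k : ℕ} (h : ∀ j < k, f j ≠ f (j + 1)) :
    changeCount f k = k := by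
  rw [changeCount, Finset.filter_true_of_mem fun j hj => h j (Finset.mem_range.1 hj),
    Finset.card_range]

lemma changeCount_eq_zero_iff {f : ℕ → α} {k : ℕ} :
    changeCount f k = 0 ↔ ∀ p < k, f p = f (p + 1) := by
  simp [changeCount, Finset.filter_eq_empty_iff]

lemma exists_first_change {f : ℕ → α} {k : ℕ} (h : changeCount f k ≠ 0) :
    ∃ a < k, (∀ p < a, f p = f (p + 1)) ∧ f a ≠ f (a + 1) := by
  set s := (Finset.range k).filter fun j => f j ≠ f (j + 1)
  have hs : s.Nonempty := Finset.card_ne_zero.1 h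
  obtain ⟨hak, ha⟩ := Finset.mem_filter.1 (s.min'_mem hs)
  refine ⟨s.min' hs, Finset.mem_range.1 hak, fun p hp => ?_, ha⟩
  by_contra hne
  exact (s.min'_le p (Finset.mem_filter.2
    ⟨Finset.mem_range.2 (hp.trans (Finset.mem_range.1 hak)), hne⟩)).not_gt hp

lemma changeCount_le_add_one {f g : ℕ → α} {k a : ℕ}
    (hf : ∀ p < a, f p = f (p + 1)) (hg : ∀ p < a, g p = g (p + 1))
    (hfg : ∀ p, a < p → f p = g p) : changeCount g k ≤ changeCount f k + 1 := by
  refine (Finset.card_le_card fun j hj => ?_).trans (Finset.card_insert_le a _)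
  obtain ⟨hjk, hj⟩ := Finset.mem_filter.1 hj
  rcases lt_trichotomy j a with hja | rfl | hja
  · exact absurd (hg j hja) hj
  · exact Finset.mem_insert_self _ _
  · rw [← hfg j hja, ← hfg (j + 1) (by omega)] at hj
    exact Finset.mem_insert_of_mem (Finset.mem_filter.2 ⟨hjk, hj⟩)

lemma changeCount_flip_first_lt {f : ℕ → α} {k a : ℕ} (hak : a < k) (ha : f a ≠ f (a + 1)) :
    changeCount (fun j => if j ≤ a then f (a + 1) else f j) k < changeCount f k := by
  refine Finset.card_lt_card ⟨fun j hj => ?_, fun hsub => ?_⟩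
  · obtain ⟨hjk, hj⟩ := Finset.mem_filter.1 hj
    by_cases hja : j < a + 1
    · obtain rfl : j = a := by
        by_contra
        simp [show j ≤ a by omega, show j + 1 ≤ a by omega] at hj
      simp at hj
    · simp only [show ¬j ≤ a by omega, show ¬j + 1 ≤ a by omega, if_false] at hj
      exact Finset.mem_filter.2 ⟨hjk, hj⟩
  · have := (Finset.mem_filter.1 (hsub (Finset.mem_filter.2 ⟨Finset.mem_range.2 hak, ha⟩))).2
    simp at this

end ChangeCount

section HierarchicalGraph

variable {n : ℕ → ℕ} {k : ℕ}

def zeroPattern (x : ∀ i : Fin k, Fin (n i)) (j : ℕ) : Bool :=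
  decide (extVal n k x j = 0)

lemma zeroPattern_val (x : ∀ i : Fin k, Fin (n i)) (i : Fin k) :
    zeroPattern x i.val = decide ((x i).val = 0) := by
  simp [zeroPattern, extVal]

lemma zeroPattern_of_le (x : ∀ i : Fin k, Fin (n i)) {j : ℕ} (hj : k ≤ j) :
    zeroPattern x j = true := by
  simp [zeroPattern, extVal, not_lt.2 hj]

lemma altNum_eq_changeCount (x : ∀ i : Fin k, Fin (n i)) :
    altNum n k x = changeCount (zeroPattern x) k := by
  unfold altNum changeCount zeroPattern
  congr 1
  refine Finset.filter_congr fun j _ => ?_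
  by_cases extVal n k x j = 0 <;> by_cases extVal n k x (j + 1) = 0 <;> simp_all

lemma altNum_le (x : ∀ i : Fin k, Fin (n i)) : altNum n k x ≤ k :=
  (altNum_eq_changeCount x).trans_le (changeCount_le _ _)

lemma zeroPattern_eq_of_agree {x y : ∀ i : Fin k, Fin (n i)} {a : ℕ}
    (hag : ∀ i : Fin k, a < i.val → x i = y i) {p : ℕ} (hp : a < p) :
    zeroPattern x p = zeroPattern y p := by
  rcases lt_or_ge p k with hpk | hpk
  · rw [zeroPattern_val x ⟨p, hpk⟩, zeroPattern_val y ⟨p, hpk⟩, hag ⟨p, hpk⟩ hp]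
  · rw [zeroPattern_of_le x hpk, zeroPattern_of_le y hpk]

lemma zeroPattern_succ_eq_of_uniform {x : ∀ i : Fin k, Fin (n i)} {j : Fin k}
    (h : (∀ i : Fin k, i.val ≤ j.val → (x i).val = 0) ∨
      (∀ i : Fin k, i.val ≤ j.val → (x i).val ≠ 0)) :
    ∀ p < j.val, zeroPattern x p = zeroPattern x (p + 1) := by
  intro p hp
  have hp' : p + 1 < k := by have := j.isLt; omega
  rw [zeroPattern_val x ⟨p, by omega⟩, zeroPattern_val x ⟨p + 1, hp'⟩]
  rcases h with h | h <;> simp [h ⟨p, _⟩ hp.le, h ⟨p + 1, hp'⟩ hp]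

lemma exists_uniform_prefix_of_adj {x y : ∀ i : Fin k, Fin (n i)} (h : HierAdj n k x y) :
    ∃ a, (∀ p < a, zeroPattern x p = zeroPattern x (p + 1)) ∧
      (∀ p < a, zeroPattern y p = zeroPattern y (p + 1)) ∧
      ∀ p, a < p → zeroPattern x p = zeroPattern y p := by
  obtain ⟨-, h | ⟨j, hj, hag⟩ | ⟨m, -, hpre, hxm, hym, -, hag⟩⟩ := h
  · exact ⟨0, by simp, by simp, fun p hp => zeroPattern_eq_of_agree h hp⟩
  · have hxy p (hp : j.val < p) := zeroPattern_eq_of_agree hag hp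
    rcases hj with ⟨hx, hy⟩ | ⟨hy, hx⟩
    · exact ⟨j, zeroPattern_succ_eq_of_uniform (.inl hx), zeroPattern_succ_eq_of_uniform (.inr hy),
        hxy⟩
    · exact ⟨j, zeroPattern_succ_eq_of_uniform (.inr hx), zeroPattern_succ_eq_of_uniform (.inl hy),
        hxy⟩
  · refine ⟨0, by simp, by simp, fun p _ => ?_⟩
    rcases lt_trichotomy p m.val with hp | rfl | hp
    · have hpk := hp.trans m.isLt
      rw [zeroPattern_val x ⟨p, hpk⟩, zeroPattern_val y ⟨p, hpk⟩, (hpre ⟨p, hpk⟩ hp).1,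
        (hpre ⟨p, hpk⟩ hp).2]
    · simp [zeroPattern_val, hxm, hym]
    · exact zeroPattern_eq_of_agree hag hp

lemma altNum_le_add_one_of_adj {x y : ∀ i : Fin k, Fin (n i)} (h : (hierGraph n k).Adj x y) :
    altNum n k y ≤ altNum n k x + 1 := by
  obtain ⟨a, hx, hy, hxy⟩ := exists_uniform_prefix_of_adj h
  simpa only [altNum_eq_changeCount] using changeCount_le_add_one hx hy hxy

lemma altNum_le_add_length {u v : ∀ i : Fin k, Fin (n i)} (p : (hierGraph n k).Walk u v) :
    altNum n k v ≤ altNum n k u + p.length := by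
  induction p with
  | nil => simp
  | cons h _ ih =>
    rw [SimpleGraph.Walk.length_cons]
    have := altNum_le_add_one_of_adj h
    omega

lemma altNum_eq_zero_iff {r x : ∀ i : Fin k, Fin (n i)} (hr : ∀ i, (r i).val = 0) :
    altNum n k x = 0 ↔ x = r := by
  rw [altNum_eq_changeCount, changeCount_eq_zero_iff]
  constructor
  · intro h
    funext i
    have := apply_eq_of_forall_lt_apply_succ h i.isLt.le
    rw [zeroPattern_val, zeroPattern_of_le x le_rfl] at this
    exact Fin.ext ((of_decide_eq_true this).trans (hr i).symm)
  · rintro rfl p -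
    simp [zeroPattern, extVal, hr]

lemma hierAdj_of_flip_prefix {x y : ∀ i : Fin k, Fin (n i)} {j : Fin k} {b : Bool}
    (hx : ∀ i : Fin k, i.val ≤ j.val → decide ((x i).val = 0) = b)
    (hy : ∀ i : Fin k, i.val ≤ j.val → decide ((y i).val = 0) = !b)
    (hag : ∀ i : Fin k, j.val < i.val → x i = y i) : HierAdj n k x y := by
  refine ⟨fun hxy => ?_, Or.inr (Or.inl ⟨j, ?_, hag⟩)⟩
  · have := hx j le_rfl
    rw [hxy, hy j le_rfl] at this
    cases b <;> simp at this
  · cases b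
    · exact .inr ⟨fun i hi => by simpa using hy i hi, fun i hi => by simpa using hx i hi⟩
    · exact .inl ⟨fun i hi => by simpa using hx i hi, fun i hi => by simpa using hy i hi⟩

lemma exists_adj_altNum_lt (hn : ∀ i < k, 2 ≤ n i) {x : ∀ i : Fin k, Fin (n i)}
    (hx : altNum n k x ≠ 0) :
    ∃ y, (hierGraph n k).Adj x y ∧ altNum n k y < altNum n k x := by
  rw [altNum_eq_changeCount] at hx ⊢
  obtain ⟨a, hak, hconst, ha⟩ := exists_first_change hx
  obtain ⟨b, hb⟩ : ∃ b, zeroPattern x a = b := ⟨_, rfl⟩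
  -- Flip the zero status of the first uniform block `x_0 … x_a`: an (A2) edge that removes the
  -- alternation at `a` and leaves all later ones.
  let y : ∀ i : Fin k, Fin (n i) := fun i =>
    if i.val ≤ a then ⟨if b then 1 else 0, by have := hn i i.isLt; split <;> omega⟩ else x i
  have hy : zeroPattern y = fun j => if j ≤ a then zeroPattern x (a + 1) else zeroPattern x j := by
    funext j
    split_ifs with hja
    · rw [zeroPattern_val y ⟨j, by omega⟩]
      cases hb : b <;> cases hb' : zeroPattern x (a + 1) <;> simp_all [y]
    · exact zeroPattern_eq_of_agree (a := a) (fun i hi => by simp [y, not_le.2 hi]) (by omega)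
  refine ⟨y, hierAdj_of_flip_prefix (j := ⟨a, hak⟩) (b := b) (fun i hi => ?_) (fun i hi => ?_)
    (fun i hi => by simp [y, not_le.2 hi]), ?_⟩
  · rw [← zeroPattern_val, ← hb]
    exact apply_eq_of_forall_lt_apply_succ hconst hi
  · cases b <;> simp [y, show i.val ≤ a from hi]
  · rw [altNum_eq_changeCount, hy]
    exact changeCount_flip_first_lt hak ha

lemma exists_walk_length_le_altNum (hn : ∀ i < k, 2 ≤ n i) {r : ∀ i : Fin k, Fin (n i)}
    (hr : ∀ i, (r i).val = 0) (x : ∀ i : Fin k, Fin (n i)) :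
    ∃ p : (hierGraph n k).Walk r x, p.length ≤ altNum n k x := by
  induction hm : altNum n k x using Nat.strong_induction_on generalizing x with
  | _ m ih =>
    rcases eq_or_ne m 0 with rfl | hm0
    · obtain rfl := (altNum_eq_zero_iff hr).1 hm
      exact ⟨.nil, le_rfl⟩
    · obtain ⟨y, hxy, hlt⟩ := exists_adj_altNum_lt hn (hm ▸ hm0)
      obtain ⟨p, hp⟩ := ih _ (hm ▸ hlt) y rfl
      exact ⟨p.concat hxy.symm, by rw [SimpleGraph.Walk.length_concat]; omega⟩

lemma dist_eq_altNum (hn : ∀ i < k, 2 ≤ n i) {r : ∀ i : Fin k, Fin (n i)}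
    (hr : ∀ i, (r i).val = 0) (x : ∀ i : Fin k, Fin (n i)) :
    (hierGraph n k).dist r x = altNum n k x := by
  obtain ⟨p, hp⟩ := exists_walk_length_le_altNum hn hr x
  obtain ⟨q, hq⟩ := SimpleGraph.Reachable.exists_walk_length_eq_dist ⟨p⟩
  have := altNum_le_add_length q
  rw [(altNum_eq_zero_iff hr).2 rfl, hq] at this
  exact le_antisymm ((SimpleGraph.dist_le p).trans hp) (by omega)

lemma exists_altNum_eq (hn : ∀ i < k, 2 ≤ n i) :
    ∃ x : ∀ i : Fin k, Fin (n i), altNum n k x = k := by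
  -- `x = …0101` alternates at every position, the last one against the padding `x_k = 0`.
  let x : ∀ i : Fin k, Fin (n i) := fun i => ⟨(k - i) % 2, by have := hn i i.isLt; omega⟩
  have hx j : extVal n k x j = (k - j) % 2 := by
    unfold extVal
    split_ifs
    · rfl
    · omega
  refine ⟨x, (altNum_eq_changeCount x).trans (changeCount_eq_self fun j hj => ?_)⟩
  simp only [zeroPattern, hx, ne_eq, decide_eq_decide]
  omega

end HierarchicalGraph

theorem stmt_12_general (n : ℕ → ℕ) (k : ℕ) (hn : ∀ i < k, 2 ≤ n i)
    (r : ∀ i : Fin k, Fin (n i)) (hr : ∀ i, (r i).val = 0) :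
    (Finset.univ.sup fun y : ∀ i : Fin k, Fin (n i) => (hierGraph n k).dist r y) = k := by
  refine le_antisymm (Finset.sup_le fun y _ => (dist_eq_altNum hn hr y).trans_le (altNum_le y)) ?_
  obtain ⟨x, hx⟩ := exists_altNum_eq hn
  calc k = (hierGraph n k).dist r x := by rw [dist_eq_altNum hn hr, hx]
    _ ≤ _ := Finset.le_sup (f := fun y => (hierGraph n k).dist r y) (Finset.mem_univ x)

/-- The eccentricity of the root `r = 00…0` of `H_{n_1,…,n_k}` equals `k`. -/
theorem stmt_12 (n : ℕ → ℕ) (k : ℕ) (hk : 1 ≤ k) (hn : ∀ i < k, 2 ≤ n i)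
    (r : ∀ i : Fin k, Fin (n i)) (hr : ∀ i, (r i).val = 0) :
    (Finset.univ.sup fun y : ∀ i : Fin k, Fin (n i) => (hierGraph n k).dist r y) = k :=
  stmt_12_general n k hn r hr
end

section
/- Let k ≥ 1 and n_1,…,n_k be integers with each n_i ≥ 2. The radius of the hierarchical graph H_{n_1,…,n_k} (the minimum over all vertices of their eccentricity) equals k. -/
/-!
Encode a string `x` by its zero pattern `b j = (x_j = 0)`, extended by `b k = true`, so that
`altNum x` counts the switches `b j ≠ b (j + 1)`, `j < k`. Each of the rules (A1)–(A3) replaces a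
constant initial block of the pattern by a constant block, so along an edge the number of switches
changes by at most one. Conversely, flipping the zero status of a string up to its first switch is
an (A2) edge removing exactly that switch, so every string is within distance `altNum x ≤ k` of
`0⋯0`.

For the lower bound, sign the number of switches by whether the last coordinate is zero. An edge
changing that status joins the all-zero string to an all-nonzero one, with signed counts `0` and
`-1`, so the signed count is still 1-Lipschitz along edges. An alternating string whose last
coordinate has the opposite status to that of `x` has signed count at least `k` away from `x`'s.
-/

open Finset

lemma SimpleGraph.Walk.abs_sub_le_length {V : Type*} {G : SimpleGraph V} {f : V → ℤ}
    (hf : ∀ u v, G.Adj u v → |f u - f v| ≤ 1) {u v : V} (p : G.Walk u v) :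
    |f u - f v| ≤ p.length := by
  induction p with
  | nil => simp
  | @cons a b c h q ih =>
    calc |f a - f c| ≤ |f a - f b| + |f b - f c| := abs_sub_le _ _ _
      _ ≤ 1 + q.length := add_le_add (hf _ _ h) ih
      _ = (cons h q).length := by rw [length_cons]; push_cast; ring

lemma SimpleGraph.Reachable.abs_sub_le_dist {V : Type*} {G : SimpleGraph V} {f : V → ℤ}
    (hf : ∀ u v, G.Adj u v → |f u - f v| ≤ 1) {u v : V} (h : G.Reachable u v) :
    |f u - f v| ≤ G.dist u v := by
  obtain ⟨p, hp⟩ := h.exists_walk_length_eq_dist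
  exact hp ▸ p.abs_sub_le_length hf

def switchSet (k : ℕ) (b : ℕ → Bool) : Finset ℕ :=
  (range k).filter fun j => b j ≠ b (j + 1)

section switchSet

variable {k a : ℕ} {b c : ℕ → Bool}

lemma mem_switchSet {j : ℕ} : j ∈ switchSet k b ↔ j < k ∧ b j ≠ b (j + 1) := by
  simp [switchSet]

lemma card_switchSet_le : #(switchSet k b) ≤ k :=
  (card_filter_le _ _).trans (card_range k).le

lemma eq_apply_zero_of_forall_lt_notMem_switchSet (ha : a ≤ k)
    (h : ∀ j < a, j ∉ switchSet k b) : ∀ i ≤ a, b i = b 0 := by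
  intro i hi
  induction i with
  | zero => rfl
  | succ i ih =>
    have hi' : ¬(i < k ∧ b i ≠ b (i + 1)) := mem_switchSet.not.1 (h i (by omega))
    rw [← ih (by omega)]
    by_contra hne
    exact hi' ⟨by omega, Ne.symm hne⟩

lemma switchSet_of_forall_eq_apply_zero (h : ∀ i < k, b i = b 0) :
    switchSet k b = if b 0 = b k then ∅ else {k - 1} := by
  ext j
  rw [mem_switchSet]
  split_ifs with hk
  · simp only [notMem_empty, iff_false, not_and, not_not]
    intro hj
    rcases Nat.lt_or_ge (j + 1) k with hj1 | hj1
    · rw [h j hj, h (j + 1) hj1]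
    · rw [h j hj, show j + 1 = k by omega, hk]
  · rw [mem_singleton]
    constructor
    · rintro ⟨hj, hne⟩
      by_contra hj'
      exact hne (by rw [h j hj, h (j + 1) (by omega)])
    · rintro rfl
      have hk0 : 0 < k := Nat.pos_of_ne_zero (by rintro rfl; exact hk rfl)
      refine ⟨by omega, ?_⟩
      rwa [h (k - 1) (by omega), show k - 1 + 1 = k by omega]

def IsPrefixMove (a : ℕ) (b c : ℕ → Bool) : Prop :=
  (∀ i ≤ a, b i = b 0) ∧ (∀ i ≤ a, c i = c 0) ∧ ∀ i, a < i → b i = c i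

lemma IsPrefixMove.symm (h : IsPrefixMove a b c) : IsPrefixMove a c b :=
  ⟨h.2.1, h.1, fun i hi => (h.2.2 i hi).symm⟩

lemma IsPrefixMove.switchSet_subset (h : IsPrefixMove a b c) (k : ℕ) :
    switchSet k b ⊆ insert a (switchSet k c) := by
  intro j hj
  rw [mem_switchSet] at hj
  rw [mem_insert, mem_switchSet]
  rcases lt_trichotomy j a with hlt | rfl | hgt
  · exact absurd (by rw [h.1 j hlt.le, h.1 (j + 1) hlt]) hj.2
  · exact Or.inl rfl
  · exact Or.inr ⟨hj.1, by rw [← h.2.2 j hgt, ← h.2.2 (j + 1) (by omega)]; exact hj.2⟩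

lemma IsPrefixMove.card_switchSet_le (h : IsPrefixMove a b c) (k : ℕ) :
    #(switchSet k b) ≤ #(switchSet k c) + 1 :=
  (card_le_card (h.switchSet_subset k)).trans (card_insert_le _ _)

lemma IsPrefixMove.card_switchSet_eq_succ (h : IsPrefixMove a b c) (ha : a < k)
    (hb : b a ≠ b (a + 1)) (hc : c a = c (a + 1)) :
    #(switchSet k b) = #(switchSet k c) + 1 := by
  have hac : a ∉ switchSet k c := fun h' => (mem_switchSet.1 h').2 hc
  suffices switchSet k b = insert a (switchSet k c) by rw [this, card_insert_of_notMem hac]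
  refine (h.switchSet_subset k).antisymm
    (insert_subset_iff.2 ⟨mem_switchSet.2 ⟨ha, hb⟩, fun j hj => ?_⟩)
  rcases mem_insert.1 (h.symm.switchSet_subset k hj) with rfl | hj'
  · exact absurd hj hac
  · exact hj'

def signedSwitchCount (k : ℕ) (b : ℕ → Bool) : ℤ :=
  if b (k - 1) then #(switchSet k b) else -#(switchSet k b)

lemma abs_signedSwitchCount_sub_of_ne (h : b (k - 1) ≠ c (k - 1)) :
    |signedSwitchCount k b - signedSwitchCount k c| = #(switchSet k b) + #(switchSet k c) := by
  have hnn : (0 : ℤ) ≤ #(switchSet k b) + #(switchSet k c) := by positivity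
  unfold signedSwitchCount
  cases hb : b (k - 1) <;> cases hc : c (k - 1) <;>
    simp only [hb, hc, ne_eq, not_true_eq_false] at h
  · simp only [Bool.false_eq_true, if_false, if_true]
    rw [abs_of_nonpos (by linarith)]
    ring
  · simp only [Bool.false_eq_true, if_false, if_true]
    rw [sub_neg_eq_add, abs_of_nonneg hnn]

lemma IsPrefixMove.abs_signedSwitchCount_sub_le_one (h : IsPrefixMove a b c)
    (hb : b k = true) (hc : c k = true) :
    |signedSwitchCount k b - signedSwitchCount k c| ≤ 1 := by
  by_cases htop : b (k - 1) = c (k - 1)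
  · have h₁ := h.card_switchSet_le k
    have h₂ := h.symm.card_switchSet_le k
    unfold signedSwitchCount
    rw [htop, abs_le]
    split_ifs <;> constructor <;> omega
  · have hak : k - 1 ≤ a := by
      by_contra hlt
      exact htop (h.2.2 (k - 1) (by omega))
    rw [abs_signedSwitchCount_sub_of_ne htop,
      switchSet_of_forall_eq_apply_zero fun i hi => h.1 i (by omega),
      switchSet_of_forall_eq_apply_zero fun i hi => h.2.1 i (by omega)]
    have hb0 : b 0 = b (k - 1) := (h.1 (k - 1) hak).symm
    have hc0 : c 0 = c (k - 1) := (h.2.1 (k - 1) hak).symm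
    rw [hb0, hc0, hb, hc]
    cases hb' : b (k - 1) <;> cases hc' : c (k - 1) <;> simp_all

lemma le_card_switchSet_add_card_switchSet (hk : 0 < k) (hb : b k = true) (hc : c k = true)
    (halt : ∀ j < k - 1, c j ≠ c (j + 1)) (htop : b (k - 1) ≠ c (k - 1)) :
    k ≤ #(switchSet k b) + #(switchSet k c) := by
  have hlow : range (k - 1) ⊆ switchSet k c := fun j hj =>
    mem_switchSet.2 ⟨(mem_range.1 hj).trans_le (Nat.sub_le k 1), halt j (mem_range.1 hj)⟩
  have hlast : k - 1 + 1 = k := by omega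
  by_cases hck : c (k - 1) = true
  · have hbk : k - 1 ∈ switchSet k b :=
      mem_switchSet.2 ⟨by omega, by rw [hlast, hb]; simpa [hck] using htop⟩
    have hc' := card_le_card hlow
    have hb' := card_pos.2 ⟨_, hbk⟩
    rw [card_range] at hc'
    omega
  · have hall : range k ⊆ switchSet k c := by
      conv_lhs => rw [← hlast, range_add_one]
      exact insert_subset (mem_switchSet.2 ⟨by omega, by rw [hlast, hc]; simpa using hck⟩) hlow
    have hc' := card_le_card hall
    rw [card_range] at hc'
    omega

end switchSet

namespace hierGraph

variable {n : ℕ → ℕ} {k : ℕ}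

def zeroPattern (x : ∀ i : Fin k, Fin (n i)) (j : ℕ) : Bool :=
  decide (extVal n k x j = 0)

lemma zeroPattern_of_lt (x : ∀ i : Fin k, Fin (n i)) {j : ℕ} (h : j < k) :
    zeroPattern x j = decide ((x ⟨j, h⟩).val = 0) := by
  simp [zeroPattern, extVal, h]

lemma zeroPattern_of_le (x : ∀ i : Fin k, Fin (n i)) {j : ℕ} (h : k ≤ j) :
    zeroPattern x j = true := by
  simp [zeroPattern, extVal, not_lt.2 h]

lemma altNum_eq_card_switchSet (x : ∀ i : Fin k, Fin (n i)) :
    altNum n k x = #(switchSet k (zeroPattern x)) := by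
  unfold altNum switchSet zeroPattern
  congr 1
  refine filter_congr fun j _ => ?_
  by_cases h₁ : extVal n k x j = 0 <;> by_cases h₂ : extVal n k x (j + 1) = 0 <;>
    simp [h₁, h₂]

lemma zeroPattern_eq_of_forall_lt {x y : ∀ i : Fin k, Fin (n i)} {a : ℕ}
    (h : ∀ i : Fin k, a < i.val → x i = y i) :
    ∀ j, a < j → zeroPattern x j = zeroPattern y j := by
  intro j hj
  by_cases hjk : j < k
  · rw [zeroPattern_of_lt x hjk, zeroPattern_of_lt y hjk, h ⟨j, hjk⟩ hj]
  · rw [zeroPattern_of_le x (not_lt.1 hjk), zeroPattern_of_le y (not_lt.1 hjk)]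

lemma zeroPattern_eq_zeroPattern_zero {x : ∀ i : Fin k, Fin (n i)} {a : ℕ} (ha : a < k)
    (P : Prop) (h : ∀ i : Fin k, i.val ≤ a → ((x i).val = 0 ↔ P)) :
    ∀ i ≤ a, zeroPattern x i = zeroPattern x 0 := by
  intro i hi
  rw [zeroPattern_of_lt x (hi.trans_lt ha), zeroPattern_of_lt x (by omega)]
  exact decide_eq_decide.2 ((h ⟨i, _⟩ hi).trans (h ⟨0, _⟩ (Nat.zero_le a)).symm)

lemma exists_isPrefixMove_of_adj {x y : ∀ i : Fin k, Fin (n i)} (h : HierAdj n k x y) :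
    ∃ a, IsPrefixMove a (zeroPattern x) (zeroPattern y) := by
  obtain ⟨-, hA1 | ⟨j, hj, hag⟩ | ⟨m, -, hpre, hxm, hym, -, hs⟩⟩ := h
  · refine ⟨0, fun i hi => by rw [Nat.le_zero.1 hi], fun i hi => by rw [Nat.le_zero.1 hi], ?_⟩
    exact zeroPattern_eq_of_forall_lt hA1
  · refine ⟨j, ?_, ?_, zeroPattern_eq_of_forall_lt hag⟩ <;>
    rcases hj with ⟨hx, hy⟩ | ⟨hy, hx⟩
    · exact zeroPattern_eq_zeroPattern_zero j.isLt True fun i hi => iff_true_intro (hx i hi)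
    · exact zeroPattern_eq_zeroPattern_zero j.isLt False fun i hi => iff_false_intro (hx i hi)
    · exact zeroPattern_eq_zeroPattern_zero j.isLt False fun i hi => iff_false_intro (hy i hi)
    · exact zeroPattern_eq_zeroPattern_zero j.isLt True fun i hi => iff_true_intro (hy i hi)
  · refine ⟨0, fun i hi => by rw [Nat.le_zero.1 hi], fun i hi => by rw [Nat.le_zero.1 hi],
      fun i _ => ?_⟩
    by_cases hik : i < k
    · rw [zeroPattern_of_lt x hik, zeroPattern_of_lt y hik]
      rcases lt_trichotomy i m with him | rfl | him
      · simp [(hpre ⟨i, hik⟩ him).1, (hpre ⟨i, hik⟩ him).2]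
      · simp [hxm, hym]
      · rw [hs ⟨i, hik⟩ him]
    · rw [zeroPattern_of_le x (not_lt.1 hik), zeroPattern_of_le y (not_lt.1 hik)]

lemma altNum_le (x : ∀ i : Fin k, Fin (n i)) : altNum n k x ≤ k :=
  (altNum_eq_card_switchSet x).trans_le card_switchSet_le

lemma eq_zero_of_altNum_eq_zero {x : ∀ i : Fin k, Fin (n i)} (h : altNum n k x = 0) (i : Fin k) :
    (x i).val = 0 := by
  rw [altNum_eq_card_switchSet, card_eq_zero] at h
  have hconst := eq_apply_zero_of_forall_lt_notMem_switchSet (k := k) (b := zeroPattern x) le_rfl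
    fun j _ => h ▸ notMem_empty j
  have := (hconst i i.isLt.le).trans (hconst k le_rfl).symm
  simpa [zeroPattern_of_lt x i.isLt, zeroPattern_of_le x le_rfl] using this

def flipZero {m : ℕ} (hm : 2 ≤ m) (v : Fin m) : Fin m :=
  if v.val = 0 then ⟨1, hm⟩ else ⟨0, by omega⟩

lemma flipZero_eq_zero_iff {m : ℕ} (hm : 2 ≤ m) (v : Fin m) :
    (flipZero hm v).val = 0 ↔ v.val ≠ 0 := by
  unfold flipZero
  split_ifs with h <;> simp [h]

lemma hierAdj_of_flip_prefix {w y : ∀ i : Fin k, Fin (n i)} {a : ℕ} (ha : a < k)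
    (hy : ∀ i : Fin k, i.val ≤ a → ((y i).val = 0 ↔ (y ⟨0, by omega⟩).val = 0))
    (hw : ∀ i : Fin k, i.val ≤ a → ((w i).val = 0 ↔ (y i).val ≠ 0))
    (hwy : ∀ i : Fin k, a < i.val → w i = y i) : HierAdj n k w y := by
  refine ⟨fun h => ?_, Or.inr (Or.inl ⟨⟨a, ha⟩, ?_, hwy⟩)⟩
  · have := hw ⟨0, by omega⟩ (Nat.zero_le a)
    rw [h] at this
    tauto
  · by_cases h0 : (y ⟨0, by omega⟩).val = 0
    · exact Or.inr ⟨fun i hi => (hy i hi).2 h0, fun i hi h => (hw i hi).1 h ((hy i hi).2 h0)⟩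
    · exact Or.inl ⟨fun i hi => (hw i hi).2 fun h => h0 ((hy i hi).1 h),
        fun i hi h => h0 ((hy i hi).1 h)⟩

lemma exists_adj_altNum_eq_succ (hn : ∀ i < k, 2 ≤ n i) {y : ∀ i : Fin k, Fin (n i)}
    (hy : altNum n k y ≠ 0) :
    ∃ w, (hierGraph n k).Adj w y ∧ altNum n k y = altNum n k w + 1 := by
  set b := zeroPattern y
  have hne : (switchSet k b).Nonempty := by
    rw [← card_pos, ← altNum_eq_card_switchSet]
    omega
  -- `b` is constant up to its first switch `a`; flipping `y` there removes that switch.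
  set a := (switchSet k b).min' hne
  obtain ⟨hak, hba⟩ := mem_switchSet.1 (min'_mem _ hne)
  have hconst : ∀ i ≤ a, b i = b 0 := eq_apply_zero_of_forall_lt_notMem_switchSet hak.le
    fun j hj hmem => absurd (min'_le _ _ hmem) (not_le.2 hj)
  let w : ∀ i : Fin k, Fin (n i) := fun i =>
    if i.val ≤ a then flipZero (hn i i.isLt) (y i) else y i
  have hw_le : ∀ i : Fin k, i.val ≤ a → ((w i).val = 0 ↔ (y i).val ≠ 0) := fun i hi => by
    simp only [w, if_pos hi, flipZero_eq_zero_iff]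
  have hw_gt : ∀ i : Fin k, a < i.val → w i = y i := fun i hi => if_neg (not_le.2 hi)
  have hflip : ∀ i ≤ a, zeroPattern w i = !b i := fun i hi => by
    simp [b, zeroPattern_of_lt _ (hi.trans_lt hak), hw_le ⟨i, _⟩ hi]
  have hsame : ∀ i, a < i → zeroPattern w i = b i := zeroPattern_eq_of_forall_lt hw_gt
  have hmove : IsPrefixMove a b (zeroPattern w) :=
    ⟨hconst, fun i hi => by rw [hflip i hi, hflip 0 (Nat.zero_le a), hconst i hi], fun i hi =>
      (hsame i hi).symm⟩
  refine ⟨w, hierAdj_of_flip_prefix hak (fun i hi => ?_) hw_le hw_gt, ?_⟩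
  · simpa [b, zeroPattern_of_lt y i.isLt, zeroPattern_of_lt y (hak.trans_le' (Nat.zero_le a))]
      using hconst i hi
  · rw [altNum_eq_card_switchSet, altNum_eq_card_switchSet]
    refine hmove.card_switchSet_eq_succ hak hba ?_
    rw [hflip a le_rfl, hsame (a + 1) (by omega)]
    revert hba
    cases b a <;> cases b (a + 1) <;> simp

lemma exists_walk_length_eq_altNum (hn : ∀ i < k, 2 ≤ n i) {z : ∀ i : Fin k, Fin (n i)}
    (hz : ∀ i, (z i).val = 0) (y : ∀ i : Fin k, Fin (n i)) :
    ∃ p : (hierGraph n k).Walk z y, p.length = altNum n k y := by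
  induction hm : altNum n k y generalizing y with
  | zero =>
    obtain rfl : z = y :=
      funext fun i => Fin.ext ((hz i).trans (eq_zero_of_altNum_eq_zero hm i).symm)
    exact ⟨.nil, rfl⟩
  | succ m ih =>
    obtain ⟨w, hadj, hw⟩ := exists_adj_altNum_eq_succ hn (y := y) (by omega)
    obtain ⟨p, hp⟩ := ih w (by omega)
    exact ⟨p.concat hadj, by rw [SimpleGraph.Walk.length_concat, hp]⟩

lemma preconnected (hn : ∀ i < k, 2 ≤ n i) : (hierGraph n k).Preconnected := by
  let z : ∀ i : Fin k, Fin (n i) := fun i => ⟨0, by have := hn i i.isLt; omega⟩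
  intro x y
  obtain ⟨p, -⟩ := exists_walk_length_eq_altNum hn (z := z) (fun _ => rfl) x
  obtain ⟨q, -⟩ := exists_walk_length_eq_altNum hn (z := z) (fun _ => rfl) y
  exact p.reachable.symm.trans q.reachable

lemma abs_signedSwitchCount_sub_le_one_of_adj {x y : ∀ i : Fin k, Fin (n i)}
    (h : (hierGraph n k).Adj x y) :
    |signedSwitchCount k (zeroPattern x) - signedSwitchCount k (zeroPattern y)| ≤ 1 := by
  obtain ⟨a, ha⟩ := exists_isPrefixMove_of_adj h
  exact ha.abs_signedSwitchCount_sub_le_one (zeroPattern_of_le x le_rfl)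
    (zeroPattern_of_le y le_rfl)

lemma exists_zeroPattern_eq (hn : ∀ i < k, 2 ≤ n i) (c : ℕ → Bool) :
    ∃ y : ∀ i : Fin k, Fin (n i), ∀ j < k, zeroPattern y j = c j := by
  refine ⟨fun i => if c i then ⟨0, by have := hn i i.isLt; omega⟩ else ⟨1, hn i i.isLt⟩,
    fun j hj => ?_⟩
  rw [zeroPattern_of_lt _ hj]
  cases c j <;> simp

lemma exists_le_dist (hk : 1 ≤ k) (hn : ∀ i < k, 2 ≤ n i) (x : ∀ i : Fin k, Fin (n i)) :
    ∃ y, k ≤ (hierGraph n k).dist x y := by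
  set b := zeroPattern x
  -- an alternating pattern ending opposite to `b`
  obtain ⟨y, hy⟩ := exists_zeroPattern_eq hn fun j =>
    if (k - 1 - j) % 2 = 0 then !b (k - 1) else b (k - 1)
  have htop : b (k - 1) ≠ zeroPattern y (k - 1) := by
    rw [hy _ (by omega)]
    simp
  have halt : ∀ j < k - 1, zeroPattern y j ≠ zeroPattern y (j + 1) := by
    intro j hj
    rw [hy j (by omega), hy (j + 1) (by omega)]
    split_ifs <;> first | omega | simp
  have hcount := le_card_switchSet_add_card_switchSet hk (zeroPattern_of_le x le_rfl)
    (zeroPattern_of_le y le_rfl) halt htop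
  have hdist := (preconnected hn x y).abs_sub_le_dist fun _ _ =>
    abs_signedSwitchCount_sub_le_one_of_adj
  rw [abs_signedSwitchCount_sub_of_ne htop] at hdist
  exact ⟨y, by exact_mod_cast (Nat.cast_le.2 hcount).trans hdist⟩

end hierGraph

/-- The radius of `H_{n_1,…,n_k}` (minimum over all vertices of their eccentricity)
equals `k`. -/
theorem stmt_13 (n : ℕ → ℕ) (k : ℕ) (hk : 1 ≤ k) (hn : ∀ i < k, 2 ≤ n i) :
    (⨅ x : ∀ i : Fin k, Fin (n i),
        Finset.univ.sup fun y : ∀ i : Fin k, Fin (n i) => (hierGraph n k).dist x y) =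
      k := by
  let z : ∀ i : Fin k, Fin (n i) := fun i => ⟨0, by have := hn i i.isLt; omega⟩
  apply le_antisymm
  · refine (ciInf_le (OrderBot.bddBelow _) z).trans (Finset.sup_le fun y _ => ?_)
    obtain ⟨p, hp⟩ := hierGraph.exists_walk_length_eq_altNum hn (z := z) (fun _ => rfl) y
    exact (SimpleGraph.dist_le p).trans (hp ▸ hierGraph.altNum_le y)
  · have : Nonempty (∀ i : Fin k, Fin (n i)) := ⟨z⟩
    refine le_ciInf fun x => ?_
    obtain ⟨y, hy⟩ := hierGraph.exists_le_dist hk hn x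
    exact hy.trans (Finset.le_sup (Finset.mem_univ y))
end

section
/- Let k ≥ 1 and consider the hierarchical graph H_{2,…,2} (k copies of 2), whose vertices are binary strings of length k. The map x ↦ x̄, which sends each binary string to the string obtained by interchanging 0's and 1's (coordinatewise complement), is a graph automorphism of H_{2,…,2}. -/
/-! In `Z_2` complementation swaps "zero" and "nonzero", so it exchanges the two orientations
of rule (A2) and trivially preserves rule (A1); rule (A3) never applies, since `Z_2` has only
one nonzero element. -/

lemma Fin.val_one_sub_eq_zero_iff (a : Fin 2) : ((1 : Fin 2) - a).val = 0 ↔ a.val ≠ 0 := by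
  revert a; decide

lemma hierAdj_one_sub {k : ℕ} {x y : Fin k → Fin 2} (h : HierAdj (fun _ => 2) k x y) :
    HierAdj (fun _ => 2) k (1 - x) (1 - y) := by
  obtain ⟨hne, h⟩ := h
  refine ⟨fun heq => hne (sub_right_injective heq), ?_⟩
  rcases h with hfirst | ⟨j, hprefix, hsuffix⟩ | ⟨m, -, -, hx, hy, hxy, -⟩
  · exact Or.inl fun i hi => by simp [hfirst i hi]
  · refine Or.inr (Or.inl ⟨j, ?_, fun i hi => by simp [hsuffix i hi]⟩)
    simp only [Pi.sub_apply, Pi.one_apply, Fin.val_one_sub_eq_zero_iff, ne_eq, not_not]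
    tauto
  · exact absurd (Fin.ext (by omega)) hxy

lemma hierAdj_one_sub_iff {k : ℕ} {x y : Fin k → Fin 2} :
    HierAdj (fun _ => 2) k (1 - x) (1 - y) ↔ HierAdj (fun _ => 2) k x y :=
  ⟨fun h => by simpa only [sub_sub_cancel] using hierAdj_one_sub h, hierAdj_one_sub⟩

theorem stmt_17_general (k : ℕ) :
    ∃ e : hierGraph (fun _ => 2) k ≃g hierGraph (fun _ => 2) k,
      ∀ (x : ∀ i : Fin k, Fin 2) (i : Fin k), e x i = 1 - x i :=
  ⟨⟨Function.Involutive.toPerm (fun x : Fin k → Fin 2 => 1 - x) (sub_sub_cancel 1),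
    hierAdj_one_sub_iff⟩, fun _ _ => rfl⟩

/-- The coordinatewise complement map `x ↦ x̄` (interchanging 0's and 1's) is a graph
automorphism of the binomial tree `H_{2,…,2}`. -/
theorem stmt_17 (k : ℕ) (hk : 1 ≤ k) :
    ∃ e : hierGraph (fun _ => 2) k ≃g hierGraph (fun _ => 2) k,
      ∀ (x : ∀ i : Fin k, Fin 2) (i : Fin k), e x i = 1 - x i :=
  stmt_17_general k
end

section
/- Let k ≥ 2, let n_1,…,n_k be integers with each n_i ≥ 2, and let 1 ≤ i ≤ k−1. Fix a string α = α_{k−i+1}…α_k with α_j ∈ Z_{n_j}, and let x = x'α and y = y'α be two vertices of the hierarchical graph H_{n_1,…,n_k} whose last i coordinates equal α. Then the graph distance between x and y in H_{n_1,…,n_k} equals the graph distance between x' and y' in the hierarchical graph H_{n_1,…,n_{k−i}} (i.e., the induced subgraph on vertices ending in α is isometrically embedded). -/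
/-!
Appending the fixed suffix `α` is a graph homomorphism `H_{n_1,…,n_{k-i}} → H_{n_1,…,n_k}`,
while truncating to the first `k - i` coordinates sends every edge of `H_{n_1,…,n_k}` to an
edge or to a single vertex (an (A3) edge acting beyond the cut collapses). Neither map
increases distances, and truncation undoes appending.
-/

namespace SimpleGraph

variable {V W : Type*} {G : SimpleGraph V} {H : SimpleGraph W} {f : V → W}

theorem Walk.exists_length_le_of_eq_or_adj
    (hf : ∀ ⦃u v⦄, G.Adj u v → f u = f v ∨ H.Adj (f u) (f v)) {u v : V} (p : G.Walk u v) :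
    ∃ q : H.Walk (f u) (f v), q.length ≤ p.length := by
  induction p with
  | nil => exact ⟨.nil, le_rfl⟩
  | cons h _ ih =>
    obtain ⟨q, hq⟩ := ih
    rcases hf h with heq | hadj
    · exact ⟨q.copy heq.symm rfl, by simp only [length_copy, length_cons]; omega⟩
    · exact ⟨.cons hadj q, by simp only [length_cons]; omega⟩

theorem edist_le_of_eq_or_adj
    (hf : ∀ ⦃u v⦄, G.Adj u v → f u = f v ∨ H.Adj (f u) (f v)) (u v : V) :
    H.edist (f u) (f v) ≤ G.edist u v := by
  rw [edist_eq_sInf]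
  refine le_sInf (Set.forall_mem_range.2 fun p => ?_)
  obtain ⟨q, hq⟩ := p.exists_length_le_of_eq_or_adj hf
  exact (edist_le q).trans (by exact_mod_cast hq)

end SimpleGraph

namespace HierGraph

variable {n : ℕ → ℕ} {k m : ℕ}

def restrict (hmk : m ≤ k) (x : ∀ j : Fin k, Fin (n j)) : ∀ j : Fin m, Fin (n j) :=
  fun j => x (Fin.castLE hmk j)

def extend (α : ∀ j : Fin k, m ≤ j.val → Fin (n j)) (u : ∀ j : Fin m, Fin (n j)) :
    ∀ j : Fin k, Fin (n j) :=
  fun j => if hj : j.val < m then u ⟨j, hj⟩ else α j (not_lt.1 hj)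

variable (α : ∀ j : Fin k, m ≤ j.val → Fin (n j))

theorem extend_of_lt (u : ∀ j : Fin m, Fin (n j)) {j : Fin k} (hj : j.val < m) :
    extend α u j = u ⟨j, hj⟩ :=
  dif_pos hj

theorem extend_of_le (u : ∀ j : Fin m, Fin (n j)) {j : Fin k} (hj : m ≤ j.val) :
    extend α u j = α j hj :=
  dif_neg (not_lt.2 hj)

theorem extend_castLE (hmk : m ≤ k) (u : ∀ j : Fin m, Fin (n j)) (j : Fin m) :
    extend α u (Fin.castLE hmk j) = u j :=
  extend_of_lt α u j.isLt

theorem restrict_extend (hmk : m ≤ k) (u : ∀ j : Fin m, Fin (n j)) :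
    restrict hmk (extend α u) = u :=
  funext (extend_castLE α hmk u)

theorem extend_eq {x : ∀ j : Fin k, Fin (n j)} {u : ∀ j : Fin m, Fin (n j)}
    (hα : ∀ (j : Fin k) (h : m ≤ j.val), x j = α j h)
    (hu : ∀ (j : Fin k) (h : j.val < m), x j = u ⟨j.val, h⟩) :
    extend α u = x := by
  funext j
  rcases lt_or_ge j.val m with hj | hj
  · rw [extend_of_lt α u hj, hu j hj]
  · rw [extend_of_le α u hj, hα j hj]

theorem extend_eq_extend_of_lt {u v : ∀ j : Fin m, Fin (n j)} {j : ℕ}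
    (huv : ∀ i : Fin m, j < i.val → u i = v i) (i : Fin k) (hi : j < i.val) :
    extend α u i = extend α v i := by
  rcases lt_or_ge i.val m with him | him
  · rw [extend_of_lt α u him, extend_of_lt α v him]
    exact huv _ hi
  · rw [extend_of_le α u him, extend_of_le α v him]

theorem hierAdj_extend (hmk : m ≤ k) {u v : ∀ j : Fin m, Fin (n j)} (h : HierAdj n m u v) :
    HierAdj n k (extend α u) (extend α v) := by
  obtain ⟨hne, h⟩ := h
  refine ⟨fun he => hne ?_, ?_⟩
  · rw [← restrict_extend α hmk u, he, restrict_extend]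
  have prefix_eq : ∀ (w : ∀ j : Fin m, Fin (n j)) {j : ℕ} (hj : j < m) (i : Fin k),
      (hi : i.val ≤ j) → extend α w i = w ⟨i, by omega⟩ :=
    fun w j hj i hi => extend_of_lt α w (by omega)
  rcases h with h1 | ⟨j, hj, hag⟩ | ⟨p, hp, hpre, hup, hvp, huvp, hs⟩
  · exact Or.inl (extend_eq_extend_of_lt α h1)
  · refine Or.inr (Or.inl ⟨Fin.castLE hmk j, ?_, extend_eq_extend_of_lt α hag⟩)
    simp only [Fin.val_castLE]
    rcases hj with ⟨ha, hb⟩ | ⟨ha, hb⟩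
    · refine Or.inl ⟨fun i hi => ?_, fun i hi => ?_⟩
      · rw [prefix_eq u j.isLt i hi]; exact ha _ hi
      · rw [prefix_eq v j.isLt i hi]; exact hb _ hi
    · refine Or.inr ⟨fun i hi => ?_, fun i hi => ?_⟩
      · rw [prefix_eq v j.isLt i hi]; exact ha _ hi
      · rw [prefix_eq u j.isLt i hi]; exact hb _ hi
  · refine Or.inr (Or.inr ⟨Fin.castLE hmk p, hp, fun i hi => ?_, ?_, ?_, ?_,
      extend_eq_extend_of_lt α hs⟩)
    · rw [prefix_eq u p.isLt i hi.le, prefix_eq v p.isLt i hi.le]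
      exact hpre _ hi
    all_goals simpa only [extend_castLE]

theorem hierAdj_restrict (hmk : m ≤ k) {x y : ∀ j : Fin k, Fin (n j)} (h : HierAdj n k x y) :
    restrict hmk x = restrict hmk y ∨ HierAdj n m (restrict hmk x) (restrict hmk y) := by
  by_cases heq : restrict hmk x = restrict hmk y
  · exact Or.inl heq
  have hm : 0 < m := (Function.ne_iff.1 heq).choose.pos
  refine Or.inr ⟨heq, ?_⟩
  rcases h.2 with h1 | ⟨j, hj, hag⟩ | ⟨p, hp, hpre, hxp, hyp, hxyp, hs⟩
  · exact Or.inl fun i hi => h1 _ hi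
  · -- an (A2) block reaching past the cut is shortened to the whole truncated string
    have hj' : min j.val (m - 1) < m := by omega
    refine Or.inr (Or.inl ⟨⟨_, hj'⟩, ?_,
      fun i (hi : min j.val (m - 1) < i.val) => hag _ (by rw [Fin.val_castLE]; omega)⟩)
    have hle : ∀ i : Fin m, i.val ≤ min j.val (m - 1) → (Fin.castLE hmk i).val ≤ j.val :=
      fun i hi => by rw [Fin.val_castLE]; omega
    rcases hj with ⟨ha, hb⟩ | ⟨ha, hb⟩
    · exact Or.inl ⟨fun i hi => ha _ (hle i hi), fun i hi => hb _ (hle i hi)⟩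
    · exact Or.inr ⟨fun i hi => ha _ (hle i hi), fun i hi => hb _ (hle i hi)⟩
  · by_cases hpm : p.val < m
    · exact Or.inr (Or.inr ⟨⟨p, hpm⟩, hp, fun i hi => hpre _ hi, hxp, hyp, hxyp,
        fun i hi => hs _ hi⟩)
    · refine absurd (funext fun i => Fin.ext ?_) heq
      have hip : (Fin.castLE hmk i).val < p.val := by rw [Fin.val_castLE]; omega
      exact (hpre _ hip).1.trans (hpre _ hip).2.symm

theorem edist_extend (hmk : m ≤ k) (u v : ∀ j : Fin m, Fin (n j)) :
    (hierGraph n k).edist (extend α u) (extend α v) = (hierGraph n m).edist u v := by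
  apply le_antisymm
  · exact SimpleGraph.edist_le_of_eq_or_adj (fun _ _ h => Or.inr (hierAdj_extend α hmk h)) u v
  · simpa only [restrict_extend] using SimpleGraph.edist_le_of_eq_or_adj (f := restrict hmk)
      (fun _ _ h => hierAdj_restrict hmk h) (extend α u) (extend α v)

end HierGraph

open HierGraph in
theorem stmt_19_general (n : ℕ → ℕ) (k i : ℕ)
    (α : ∀ j : Fin k, k - i ≤ j.val → Fin (n j))
    (x y : ∀ j : Fin k, Fin (n j))
    (hx : ∀ (j : Fin k) (h : k - i ≤ j.val), x j = α j h)
    (hy : ∀ (j : Fin k) (h : k - i ≤ j.val), y j = α j h)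
    (x' y' : ∀ j : Fin (k - i), Fin (n j))
    (hx' : ∀ (j : Fin k) (h : j.val < k - i), x j = x' ⟨j.val, h⟩)
    (hy' : ∀ (j : Fin k) (h : j.val < k - i), y j = y' ⟨j.val, h⟩) :
    (hierGraph n k).dist x y = (hierGraph n (k - i)).dist x' y' := by
  rw [← extend_eq α hx hx', ← extend_eq α hy hy', SimpleGraph.dist, SimpleGraph.dist,
    edist_extend α (Nat.sub_le k i)]

/-- For a fixed suffix `α` of length `i` (with `1 ≤ i ≤ k-1`), if `x = x'α` and `y = y'α`
are vertices of `H_{n_1,…,n_k}` ending in `α`, then the distance between `x` and `y` in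
`H_{n_1,…,n_k}` equals the distance between `x'` and `y'` in `H_{n_1,…,n_{k-i}}`. -/
theorem stmt_19 (n : ℕ → ℕ) (k i : ℕ) (hk : 2 ≤ k) (hn : ∀ j < k, 2 ≤ n j)
    (hi1 : 1 ≤ i) (hik : i ≤ k - 1)
    (α : ∀ j : Fin k, k - i ≤ j.val → Fin (n j))
    (x y : ∀ j : Fin k, Fin (n j))
    (hx : ∀ (j : Fin k) (h : k - i ≤ j.val), x j = α j h)
    (hy : ∀ (j : Fin k) (h : k - i ≤ j.val), y j = α j h)
    (x' y' : ∀ j : Fin (k - i), Fin (n j))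
    (hx' : ∀ (j : Fin k) (h : j.val < k - i), x j = x' ⟨j.val, h⟩)
    (hy' : ∀ (j : Fin k) (h : j.val < k - i), y j = y' ⟨j.val, h⟩) :
    (hierGraph n k).dist x y = (hierGraph n (k - i)).dist x' y' :=
  stmt_19_general n k i α x y hx hy x' y' hx' hy'
end
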